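/- arXiv:1511.04739 — 8 statements merged into one kernel-verified Lean document; each statement's English description precedes it below -/
import Mathlib

section
/- Let r ≥ 2 be an integer, d > 0 a real number, and k ≥ 0 an integer; set s = 1+(r−1)k. Let S_k be the set of sequences (a_1, …, a_s) of non-negative integers such that Σ_{i=1}^s a_i = k and, for all 1 ≤ j < s, Σ_{i=1}^j (r−1)·a_i ≥ j. Then Σ over (a_1,…,a_s) ∈ S_k of Π_{i=1}^s (e^{−d}·d^{a_i}/a_i!) equals s^{k−1}·d^k·e^{−d·s}/k!, which equals (1/s) times the probability that a Poisson random variable with mean d·s takes the value k. -/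
/-!
By the cycle lemma, every `a` with `∑ aᵢ = k` has exactly one cyclic rotation in `S_k`: the walk
with steps `(r - 1) aᵢ - 1` drops by exactly `1` over a period of length `s`, so it has a unique
first minimum modulo `s`, and the rotation starting there is the one whose partial sums stay
`≥ j`. Rotation preserves `∏ d^{aᵢ} / aᵢ!`, so summing over `S_k` is `1/s` times summing over
all `a` with `∑ aᵢ = k`, which by the multinomial theorem is `(s d)^k / k!`; the factors
`e^{-d}` contribute `e^{-ds}`.
-/

open Finset BigOperators

open Classical in
/-- `Sk r k s` = the set of sequences `(a_1, …, a_s)` of non-negative integers (with each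
entry at most `k`) such that `Σ a_i = k` and for all `1 ≤ j < s`,
`Σ_{i ≤ j} (r−1)·a_i ≥ j`. -/
noncomputable def Sk (r k s : ℕ) : Finset (Fin s → ℕ) :=
  (Fintype.piFinset (fun _ : Fin s => Finset.range (k + 1))).filter
    (fun a => (∑ i, a i = k) ∧
      ∀ j : ℕ, 1 ≤ j → j < s →
        (j : ℕ) ≤ ∑ i ∈ Finset.univ.filter (fun i : Fin s => (i : ℕ) < j), (r - 1) * a i)

open Fin.NatCast
open scoped Nat

theorem cycle_lemma {s : ℕ} (hs : 0 < s) (S : ℕ → ℤ) (hper : ∀ n, S (n + s) = S n - 1) :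
    ∃! t, t < s ∧ ∀ j, 1 ≤ j → j < s → S t ≤ S (t + j) := by
  classical
  obtain ⟨t, hts, htmin, hbefore⟩ : ∃ t < s, (∀ u < s, S t ≤ S u) ∧ ∀ u < t, S t < S u := by
    have hmin : ∃ t, t < s ∧ ∀ u < s, S t ≤ S u := by
      obtain ⟨t, ht, hmin⟩ := (range s).exists_min_image S (nonempty_range_iff.2 hs.ne')
      exact ⟨t, mem_range.1 ht, fun u hu => hmin u (mem_range.2 hu)⟩
    obtain ⟨hts, htmin⟩ := Nat.find_spec hmin
    refine ⟨Nat.find hmin, hts, htmin, fun u hu => ?_⟩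
    obtain ⟨v, hv, hvu⟩ : ∃ v < s, S v < S u := by
      simpa [hu.trans hts] using Nat.find_min hmin hu
    exact (htmin v hv).trans_lt hvu
  have hgood : ∀ j, 1 ≤ j → j < s → S t ≤ S (t + j) := by
    intro j _ hj
    rcases lt_or_ge (t + j) s with h | h
    · exact htmin _ h
    · obtain ⟨u, hu⟩ : ∃ u, t + j = u + s := ⟨t + j - s, by omega⟩
      rw [hu, hper]
      linarith [hbefore u (by omega)]
  refine ⟨t, ⟨hts, hgood⟩, ?_⟩
  -- Two good starting points `u < v` would give `S u ≤ S v ≤ S (u + s) = S u - 1`.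
  have key : ∀ u v, u < v → v < s → (∀ j, 1 ≤ j → j < s → S u ≤ S (u + j)) →
      (∀ j, 1 ≤ j → j < s → S v ≤ S (v + j)) → False := by
    intro u v huv hvs hu hv
    have h1 := hu (v - u) (by omega) (by omega)
    have h2 := hv (u + s - v) (by omega) (by omega)
    rw [Nat.add_sub_cancel' huv.le] at h1
    rw [Nat.add_sub_cancel' (by omega), hper] at h2
    omega
  rintro t' ⟨ht's, ht'⟩
  rcases lt_trichotomy t' t with h | h | h
  · exact (key _ _ h hts ht' hgood).elim
  · exact h
  · exact (key _ _ h ht's hgood ht').elim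

theorem sum_range_natCast_add {M : Type*} [AddCommMonoid M] {s : ℕ} [NeZero s] (f : Fin s → M)
    (m : ℕ) : ∑ i ∈ range s, f ((m + i : ℕ) : Fin s) = ∑ i, f i := by
  rw [← Fin.sum_univ_eq_sum_range (fun i => f ((m + i : ℕ) : Fin s))]
  simpa using Equiv.sum_comp (Equiv.addLeft (m : Fin s)) f

theorem sum_filter_val_lt {M : Type*} [AddCommMonoid M] {s j : ℕ} (hj : j ≤ s) (f : ℕ → M) :
    ∑ i ∈ univ.filter (fun i : Fin s => (i : ℕ) < j), f i = ∑ i ∈ range j, f i := by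
  rw [sum_filter, Fin.sum_univ_eq_sum_range (fun i => if i < j then f i else 0), ← sum_filter]
  congr 1
  ext i
  simp only [mem_filter, mem_range]
  omega

section Walk

variable {s : ℕ} [NeZero s]

-- `(i : Fin s)` is `i % s`, so the walk runs through `a` periodically.
def walk (q : ℕ) (a : Fin s → ℕ) (n : ℕ) : ℤ :=
  ∑ i ∈ range n, ((q * a (i : Fin s) : ℤ) - 1)

theorem walk_add (q : ℕ) (a : Fin s → ℕ) (m n : ℕ) :
    walk q a (m + n) = walk q a m + ∑ i ∈ range n, ((q * a ((m + i : ℕ) : Fin s) : ℤ) - 1) :=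
  sum_range_add _ m n

theorem walk_add_period {q : ℕ} {a : Fin s → ℕ} (hs : s = 1 + q * ∑ i, a i) (n : ℕ) :
    walk q a (n + s) = walk q a n - 1 := by
  rw [walk_add, sum_range_natCast_add (fun i => (q * a i : ℤ) - 1), sum_sub_distrib,
    ← mul_sum, sum_const, card_univ, Fintype.card_fin, nsmul_one]
  have : (s : ℤ) = 1 + q * ∑ i, (a i : ℤ) := by exact_mod_cast hs
  rw [this]
  ring

end Walk

def rotate {G β : Type*} [AddGroup G] (t : G) : Equiv.Perm (G → β) :=
  (Equiv.addRight t).symm.arrowCongr (Equiv.refl β)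

@[simp]
theorem rotate_apply {G β : Type*} [AddGroup G] (t : G) (a : G → β) (i : G) :
    rotate t a i = a (i + t) :=
  rfl

theorem sum_rotate {G M : Type*} [AddGroup G] [Fintype G] [AddCommMonoid M] (t : G) (a : G → M) :
    ∑ i, rotate t a i = ∑ i, a i :=
  Equiv.sum_comp (Equiv.addRight t) a

theorem mem_Sk_iff {r k s : ℕ} {a : Fin s → ℕ} (ha : ∑ i, a i = k) :
    a ∈ Sk r k s ↔ ∀ j, 1 ≤ j → j < s →
      j ≤ ∑ i ∈ univ.filter (fun i : Fin s => (i : ℕ) < j), (r - 1) * a i := by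
  have hle : ∀ i, a i < k + 1 := fun i =>
    Nat.lt_succ_of_le (ha ▸ single_le_sum (fun _ _ => Nat.zero_le _) (mem_univ i))
  simp [Sk, Fintype.mem_piFinset, hle, ha]

theorem rotate_mem_Sk_iff {r k s : ℕ} [NeZero s] {a : Fin s → ℕ} (ha : ∑ i, a i = k)
    (t : Fin s) : rotate t a ∈ Sk r k s ↔
      ∀ j, 1 ≤ j → j < s → walk (r - 1) a t ≤ walk (r - 1) a (t + j) := by
  rw [mem_Sk_iff ((sum_rotate t a).trans ha)]
  refine forall₃_congr fun j _ hj => ?_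
  have hrot : ∀ i : Fin s, a (i + t) = a ((t + i : ℕ) : Fin s) := fun i => by
    simp [add_comm]
  simp only [rotate_apply, hrot]
  rw [sum_filter_val_lt hj.le (fun i => (r - 1) * a ((t + i : ℕ) : Fin s)), walk_add,
    le_add_iff_nonneg_right, sum_sub_distrib, sum_const, card_range, nsmul_one, sub_nonneg]
  norm_cast

theorem existsUnique_rotate_mem_Sk {r k s : ℕ} [NeZero s] (hs : s = 1 + (r - 1) * k)
    {a : Fin s → ℕ} (ha : ∑ i, a i = k) : ∃! t : Fin s, rotate t a ∈ Sk r k s := by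
  obtain ⟨t, ⟨hts, ht⟩, huniq⟩ :=
    cycle_lemma (Nat.pos_of_neZero s) _ (walk_add_period (a := a) (ha ▸ hs))
  refine ⟨⟨t, hts⟩, (rotate_mem_Sk_iff ha _).2 ht, fun t' ht' => Fin.ext ?_⟩
  exact huniq t' ⟨t'.isLt, (rotate_mem_Sk_iff ha t').1 ht'⟩

theorem sum_eq_card_nsmul_sum_of_existsUnique {ι α M : Type*} [Fintype ι] [AddCommMonoid M]
    (σ : ι → Equiv.Perm α) {A B : Finset α} {f : α → M} (hf : ∀ i a, f (σ i a) = f a)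
    (hB : ∀ i, ∀ b ∈ B, (σ i).symm b ∈ A) (hA : ∀ a ∈ A, ∃! i, σ i a ∈ B) :
    ∑ a ∈ A, f a = Fintype.card ι • ∑ b ∈ B, f b := by
  rw [← card_univ, ← sum_const, ← sum_product']
  symm
  refine sum_bij (fun p _ => (σ p.1).symm p.2) (fun p hp => hB _ _ (mem_product.1 hp).2)
    ?_ ?_ fun p _ => by rw [← hf p.1 ((σ p.1).symm p.2), Equiv.apply_symm_apply]
  · rintro ⟨i, b⟩ hib ⟨i', b'⟩ hib' h
    simp only [mem_product] at hib hib'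
    have hi : i = i' := (hA _ (hB i b hib.2)).unique (by simpa using hib.2)
      (by simpa [h] using hib'.2)
    subst hi
    simpa using h
  · intro a ha
    obtain ⟨i, hi, -⟩ := hA a ha
    exact ⟨(i, σ i a), mem_product.2 ⟨mem_univ i, hi⟩, by simp⟩

theorem sum_piAntidiag_prod_pow_div_factorial {ι K : Type*} [DecidableEq ι] [Field K]
    [CharZero K] (s : Finset ι) (x : ι → K) (n : ℕ) :
    ∑ k ∈ piAntidiag s n, ∏ i ∈ s, x i ^ k i / (k i)! = (∑ i ∈ s, x i) ^ n / n ! := by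
  rw [sum_pow_eq_sum_piAntidiag, sum_div]
  refine sum_congr rfl fun k hk => ?_
  have hspec : ((∏ i ∈ s, (k i)! : ℕ) : K) * Nat.multinomial s k = n ! := by
    rw [← (mem_piAntidiag.1 hk).1]
    exact_mod_cast Nat.multinomial_spec s k
  have hfac : ((∏ i ∈ s, (k i)! : ℕ) : K) ≠ 0 :=
    Nat.cast_ne_zero.2 (prod_ne_zero_iff.2 fun i _ => Nat.factorial_ne_zero _)
  have hmul : (Nat.multinomial s k : K) ≠ 0 := Nat.cast_ne_zero.2 (Nat.multinomial_pos s k).ne'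
  rw [prod_div_distrib, ← hspec, ← Nat.cast_prod]
  field_simp

theorem mul_sum_Sk_prod_pow_div_factorial {r k s : ℕ} [NeZero s] (hs : s = 1 + (r - 1) * k)
    {K : Type*} [Field K] [CharZero K] (x : K) :
    s * ∑ a ∈ Sk r k s, ∏ i, x ^ a i / (a i)! = (s * x) ^ k / k ! := by
  have hsum : ∀ b ∈ Sk r k s, ∑ i, b i = k := fun b hb => (mem_filter.1 hb).2.1
  have := sum_eq_card_nsmul_sum_of_existsUnique rotate (A := piAntidiag univ k)
    (f := fun a : Fin s → ℕ => ∏ i, x ^ a i / (a i)!)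
    (fun t a => Equiv.prod_comp (Equiv.addRight t) fun i => x ^ a i / (a i)!)
    (fun t b hb => mem_piAntidiag.2 ⟨by rw [← hsum b hb, ← sum_rotate t, Equiv.apply_symm_apply],
      fun i _ => mem_univ i⟩)
    (fun a ha => existsUnique_rotate_mem_Sk hs (by simpa using (mem_piAntidiag.1 ha).1))
  rw [sum_piAntidiag_prod_pow_div_factorial] at this
  simp only [sum_const, Finset.card_univ, Fintype.card_fin, nsmul_eq_mul] at this
  exact this.symm

theorem stmt4_general (r : ℕ) (d : ℝ) (k : ℕ) (s : ℕ)
    (hs : s = 1 + (r - 1) * k) :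
    (∑ a ∈ Sk r k s, ∏ i : Fin s, Real.exp (-d) * d ^ (a i) / (Nat.factorial (a i)))
        = (s : ℝ) ^ ((k : ℤ) - 1) * d ^ k * Real.exp (-(d * s)) / (Nat.factorial k)
      ∧ (s : ℝ) ^ ((k : ℤ) - 1) * d ^ k * Real.exp (-(d * s)) / (Nat.factorial k)
        = (1 / s) * (Real.exp (-(d * s)) * (d * s) ^ k / (Nat.factorial k)) := by
  have : NeZero s := ⟨by omega⟩
  have hs0 : (s : ℝ) ≠ 0 := Nat.cast_ne_zero.2 (NeZero.ne s)
  have hterm : ∀ a : Fin s → ℕ, ∏ i, Real.exp (-d) * d ^ a i / (a i)! =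
      Real.exp (-(d * s)) * ∏ i, d ^ a i / (a i)! := fun a => by
    simp_rw [mul_div_assoc, prod_mul_distrib, prod_const, Finset.card_univ, Fintype.card_fin,
      ← Real.exp_nat_mul, mul_neg, mul_comm d]
  have hsum : ∑ a ∈ Sk r k s, ∏ i, d ^ a i / (a i)! = (s * d) ^ k / k ! / s := by
    rw [← mul_sum_Sk_prod_pow_div_factorial hs d]
    field_simp
  have hzpow : (s : ℝ) ^ ((k : ℤ) - 1) = s ^ k / s := by
    rw [zpow_sub₀ hs0, zpow_one, zpow_natCast]
  rw [sum_congr rfl fun a _ => hterm a, ← mul_sum, hsum, hzpow]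
  constructor <;> ring

/-- for `r ≥ 2`, `d > 0`, `k ≥ 0` and `s = 1+(r−1)k`,
`Σ_{a ∈ S_k} Π_i e^{−d}·d^{a_i}/a_i! = s^{k−1}·d^k·e^{−ds}/k!`, which equals `(1/s)`
times the probability that a `Po(ds)` random variable equals `k`. -/
theorem stmt4 (r : ℕ) (hr : 2 ≤ r) (d : ℝ) (hd : 0 < d) (k : ℕ) (s : ℕ)
    (hs : s = 1 + (r - 1) * k) :
    (∑ a ∈ Sk r k s, ∏ i : Fin s, Real.exp (-d) * d ^ (a i) / (Nat.factorial (a i)))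
        = (s : ℝ) ^ ((k : ℤ) - 1) * d ^ k * Real.exp (-(d * s)) / (Nat.factorial k)
      ∧ (s : ℝ) ^ ((k : ℤ) - 1) * d ^ k * Real.exp (-(d * s)) / (Nat.factorial k)
        = (1 / s) * (Real.exp (-(d * s)) * (d * s) ^ k / (Nat.factorial k)) :=
  stmt4_general r d k s hs
end

section
/- Fix an integer r ≥ 2. There is a constant d_0 > 0 such that for all real d ≥ d_0 and all integers k ≥ 0, π_{k,r,d} ≤ e^{−d(s+1)/2}, where s = 1+(r−1)k. -/
/-!
Bounding `s^(k-1) ≤ s^k` and `x^k / k! ≤ 8^k e^(x/8)` at `x = s d` gives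
`π_{k,r,d} ≤ 8^k e^(-7 s d / 8)`. For `k ≥ 1` we have `s ≥ k + 1`, so `3 s ≥ 2 k + 4`, and once
`d ≥ 4 log 8` the factor `8^k ≤ e^(k d / 4)` is absorbed into the exponent. For `k = 0` the
bound is an equality.
-/

/-- `π_{k,r,d} = s^{k−1}·d^k·e^{−d·s}/k!` where `s = 1+(r−1)k`. -/
noncomputable def pik (r k : ℕ) (d : ℝ) : ℝ :=
  ((1 + (r - 1) * k : ℕ) : ℝ) ^ ((k : ℤ) - 1) * d ^ k *
    Real.exp (-(d * ((1 + (r - 1) * k : ℕ) : ℝ))) / (Nat.factorial k)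

open Real

theorem pik_zero (r : ℕ) (d : ℝ) : pik r 0 d = exp (-d) := by
  simp [pik]

theorem pik_le_pow_div_factorial_mul_exp (r k : ℕ) {d : ℝ} (hd : 0 ≤ d) :
    pik r k d ≤ (((1 + (r - 1) * k : ℕ) : ℝ) * d) ^ k / k.factorial *
      exp (-(d * ((1 + (r - 1) * k : ℕ) : ℝ))) := by
  set s : ℝ := ((1 + (r - 1) * k : ℕ) : ℝ)
  have hs : 1 ≤ s := by simp only [s]; exact_mod_cast Nat.le_add_right 1 _
  have hpow : s ^ ((k : ℤ) - 1) ≤ s ^ k := by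
    simpa using zpow_le_zpow_right₀ hs (show (k : ℤ) - 1 ≤ k by omega)
  rw [pik, mul_pow, div_mul_eq_mul_div]
  gcongr

theorem pow_div_factorial_le_pow_mul_exp {x a : ℝ} (hx : 0 ≤ x) (ha : 0 < a) (k : ℕ) :
    x ^ k / k.factorial ≤ a ^ k * exp (x / a) := by
  calc x ^ k / k.factorial = a ^ k * ((x / a) ^ k / k.factorial) := by
        rw [div_pow]; field_simp
    _ ≤ a ^ k * exp (x / a) := by
        gcongr; exact pow_div_factorial_le_exp _ (div_nonneg hx ha.le) k

theorem natCast_add_one_le_cast_one_add_mul {r : ℕ} (hr : 2 ≤ r) (k : ℕ) :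
    (k : ℝ) + 1 ≤ ((1 + (r - 1) * k : ℕ) : ℝ) := by
  have : k ≤ (r - 1) * k := Nat.le_mul_of_pos_left k (by omega)
  exact_mod_cast (by omega : k + 1 ≤ 1 + (r - 1) * k)

theorem pow_div_factorial_mul_exp_le {k : ℕ} (hk : 1 ≤ k) {s d : ℝ} (hs : (k : ℝ) + 1 ≤ s)
    (hd : 4 * log 8 ≤ d) :
    (s * d) ^ k / k.factorial * exp (-(d * s)) ≤ exp (-(d * (s + 1) / 2)) := by
  have hd0 : 0 ≤ d := le_trans (by positivity) hd
  have h8 : (8 : ℝ) ^ k ≤ exp (k * d / 4) := by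
    rw [← exp_log (by norm_num : (0 : ℝ) < 8), ← exp_nat_mul]
    gcongr
    nlinarith
  have hk' : (1 : ℝ) ≤ k := by exact_mod_cast hk
  calc (s * d) ^ k / k.factorial * exp (-(d * s))
      ≤ 8 ^ k * exp (s * d / 8) * exp (-(d * s)) := by
        gcongr
        exact pow_div_factorial_le_pow_mul_exp (by nlinarith) (by norm_num) k
    _ ≤ exp (k * d / 4) * exp (s * d / 8) * exp (-(d * s)) := by gcongr
    _ = exp (k * d / 4 + s * d / 8 - d * s) := by rw [← exp_add, ← exp_add]; ring_nf
    _ ≤ exp (-(d * (s + 1) / 2)) := by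
        gcongr
        nlinarith

/-- for fixed `r ≥ 2` there is `d₀ > 0` such that for all `d ≥ d₀` and all
`k ≥ 0`, `π_{k,r,d} ≤ e^{−d(s+1)/2}` where `s = 1+(r−1)k`. -/
theorem stmt5 (r : ℕ) (hr : 2 ≤ r) :
    ∃ d₀ : ℝ, 0 < d₀ ∧ ∀ d : ℝ, d₀ ≤ d → ∀ k : ℕ,
      pik r k d ≤ Real.exp (-(d * (((1 + (r - 1) * k : ℕ) : ℝ) + 1) / 2)) := by
  refine ⟨4 * log 8, by positivity, fun d hd k => ?_⟩
  rcases k.eq_zero_or_pos with rfl | hk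
  · rw [pik_zero]
    norm_num
  · calc pik r k d ≤ _ := pik_le_pow_div_factorial_mul_exp r k (le_trans (by positivity) hd)
      _ ≤ _ := pow_div_factorial_mul_exp_le hk (natCast_add_one_le_cast_one_add_mul hr k) hd
end

section
/- Let r ≥ 2 be an integer and d ≥ 0 a real number with (r−1)·d < 1. Then Σ_{k=0}^∞ π_{k,r,d}/(1+(r−1)k) = 1 − (r−1)·d/r; equivalently, Σ_{k=0}^∞ (1+(r−1)k)^{k−2}·d^k·e^{−d(1+(r−1)k)}/k! = 1 − (r−1)·d/r. -/
/-!
Put `t = r - 1` and `x = d e^{-td}`. Since `d^k e^{-d(1+tk)} = e^{-d} x^k` and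
`1/(1+tk) = 1 - tk/(1+tk)`, the series splits into two Abel series
`A_a(x) = Σ_k a (a+tk)^{k-1} x^k / k!`, with `a = 1` and (after a shift of the index)
`a = t + 1`. For `0 ≤ d < 1/t` one has `A_a(d e^{-td}) = e^{ad}`, so the sum is
`e^{-d} (e^d - t x e^{(t+1)d} / (t+1)) = 1 - td/(t+1)`.

The evaluation `A_a(d e^{-td}) = e^{ad}` is first proved for small `|d|`: expanding `e^{-tkd}`
gives an absolutely convergent double series, which regrouped along `k + j = n` becomes
`Σ_n (ad)^n / n!` by Abel's identity `Σ_k C(n,k) a (a+tk)^{k-1} (y-tk)^{n-k} = (a+y)^n` at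
`y = 0`. Both sides are analytic in `d` on `[0, 1/t)`, because `A_a` converges for
`|x| < 1/(te)` and `t e · d e^{-td} < 1` when `td ≠ 1`; the identity theorem does the rest.
-/

open Finset Real Nat Topology

lemma hasSum_pow_div_factorial_exp (x : ℝ) : HasSum (fun n => x ^ n / n !) (exp x) := by
  rw [exp_eq_exp_ℝ]
  exact NormedSpace.expSeries_div_hasSum_exp x

theorem HasSum.sum_antidiagonal {α : Type*} [AddCommMonoid α] [TopologicalSpace α]
    [ContinuousAdd α] [RegularSpace α] {f : ℕ × ℕ → α} {s : α} (h : HasSum f s) :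
    HasSum (fun n => ∑ p ∈ antidiagonal n, f p) s :=
  (Finset.HasAntidiagonal.sigmaAntidiagonalEquivProd.hasSum_iff.2 h).sigma fun n =>
    (antidiagonal n).hasSum f

open fwdDiff Polynomial in
lemma sum_neg_one_pow_choose_mul_pow {R : Type*} [CommRing R] (a t : R) (n : ℕ) :
    ∑ k ∈ range (n + 2), (-1) ^ (n + 1 - k) * ((n + 1).choose k : R) * (a + t * k) ^ n = 0 := by
  set P : R[X] := (C t * X + C a) ^ n
  have hP : P.natDegree < n + 1 :=
    Nat.lt_succ_of_le ((natDegree_pow_le_of_le n natDegree_linear_le).trans_eq (mul_one n))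
  have := congr_fun (fwdDiff_iter_eq_zero_of_degree_lt hP) 0
  rw [fwdDiff_iter_eq_sum_shift] at this
  simpa [P, add_comm (t * _) a] using this

lemma hasDerivAt_sum_choose_mul_sub_pow (c b : ℕ → ℝ) (n : ℕ) (y : ℝ) :
    HasDerivAt
      (fun y => ∑ k ∈ range (n + 2), ((n + 1).choose k : ℝ) * c k * (y - b k) ^ (n + 1 - k))
      ((n + 1) * ∑ k ∈ range (n + 1), (n.choose k : ℝ) * c k * (y - b k) ^ (n - k)) y := by
  have hterm (k : ℕ) :
      HasDerivAt (fun y => ((n + 1).choose k : ℝ) * c k * (y - b k) ^ (n + 1 - k))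
        (((n + 1).choose k : ℝ) * c k * ((n + 1 - k : ℕ) * (y - b k) ^ (n - k))) y := by
    have := (((hasDerivAt_id y).sub_const (b k)).pow (n + 1 - k)).const_mul
      (((n + 1).choose k : ℝ) * c k)
    simpa [Nat.sub_sub, add_comm 1 k, Nat.add_sub_add_right] using this
  refine (HasDerivAt.fun_sum fun k _ => hterm k).congr_deriv ?_
  rw [sum_range_succ, Nat.sub_self, Nat.cast_zero, zero_mul, mul_zero, add_zero, mul_sum]
  refine sum_congr rfl fun k hk => ?_
  have hchoose : ((n + 1).choose k : ℝ) * (n + 1 - k : ℕ) = n.choose k * (n + 1) := by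
    exact_mod_cast (Nat.choose_mul_succ_eq n k).symm
  linear_combination (c k * (y - b k) ^ (n - k)) * hchoose

lemma mul_exp_one_mul_exp_neg_lt_one {s : ℝ} (hs : s ≠ 1) : s * exp 1 * exp (-s) < 1 := by
  have h := add_one_lt_exp (sub_ne_zero.mpr hs)
  rw [sub_add_cancel] at h
  calc s * exp 1 * exp (-s) < exp (s - 1) * exp 1 * exp (-s) := by gcongr
    _ = 1 := by rw [← exp_add, ← exp_add]; norm_num

noncomputable def abelCoeff (a t : ℝ) : ℕ → ℝ
  | 0 => 1
  | k + 1 => a * (a + t * (k + 1)) ^ k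

lemma abelCoeff_mul_pow {a t : ℝ} {n k : ℕ} (hk : k ≤ n + 1) :
    abelCoeff a t k * (a + t * k) ^ (n + 1 - k) = a * (a + t * k) ^ n := by
  cases k with
  | zero => simp [abelCoeff, _root_.pow_succ']
  | succ k =>
    rw [abelCoeff, mul_assoc]
    push_cast
    rw [← pow_add]
    congr 2
    omega

theorem sum_choose_mul_abelCoeff_mul_sub_pow (a t y : ℝ) (n : ℕ) :
    ∑ k ∈ range (n + 1), (n.choose k : ℝ) * abelCoeff a t k * (y - t * k) ^ (n - k) =
      (a + y) ^ n := by
  -- Both sides have `y`-derivative `n + 1` times the corresponding sides for `n`; at `y = -a`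
  -- the left side is an `(n + 1)`-st finite difference of a polynomial of degree `n`.
  induction n generalizing y with
  | zero => simp [abelCoeff]
  | succ n ih =>
    set f : ℝ → ℝ := fun y =>
      (∑ k ∈ range (n + 2),
        ((n + 1).choose k : ℝ) * abelCoeff a t k * (y - t * k) ^ (n + 1 - k)) - (a + y) ^ (n + 1)
    have hf : ∀ y, HasDerivAt f 0 y := fun y => by
      have hpow : HasDerivAt (fun y => (a + y) ^ (n + 1)) ((n + 1) * (a + y) ^ n) y := by
        simpa using ((hasDerivAt_id y).const_add a).fun_pow (n + 1)
      have h :=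
        (hasDerivAt_sum_choose_mul_sub_pow (abelCoeff a t) (fun k => t * k) n y).fun_sub hpow
      rwa [ih, sub_self] at h
    have hf_neg_a : f (-a) = 0 := by
      have hterm : ∀ k ∈ range (n + 2), ((n + 1).choose k : ℝ) * abelCoeff a t k
          * (-a - t * k) ^ (n + 1 - k) =
            a * ((-1) ^ (n + 1 - k) * ((n + 1).choose k : ℝ) * (a + t * k) ^ n) := by
        intro k hk
        rw [show -a - t * k = -(a + t * k) by ring, neg_pow]
        linear_combination ((-1) ^ (n + 1 - k) * ((n + 1).choose k : ℝ)) *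
          abelCoeff_mul_pow (a := a) (t := t) (Nat.lt_succ_iff.mp (mem_range.mp hk))
      simp only [f, sum_congr rfl hterm, ← mul_sum, sum_neg_one_pow_choose_mul_pow]
      ring
    have hconst := is_const_of_deriv_eq_zero (fun y => (hf y).differentiableAt)
      (fun y => (hf y).deriv) y (-a)
    linear_combination hconst + hf_neg_a

noncomputable def abelSeries (a t x : ℝ) : ℝ := ∑' k, abelCoeff a t k / k ! * x ^ k

lemma abs_abelCoeff_le (a : ℝ) {t : ℝ} (ht : 0 ≤ t) (k : ℕ) :
    |abelCoeff a t k| ≤ (|a| + t * k) ^ k := by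
  cases k with
  | zero => simp [abelCoeff]
  | succ k =>
    have hle : |a + t * (k + 1)| ≤ |a| + t * (k + 1 : ℕ) := by
      push_cast
      exact (abs_add_le _ _).trans_eq (by rw [abs_of_nonneg (a := t * _) (by positivity)])
    rw [abelCoeff, abs_mul, abs_pow, _root_.pow_succ']
    push_cast at hle ⊢
    gcongr
    exact le_add_of_nonneg_right (by positivity)

lemma abs_abelCoeff_div_factorial_le (a : ℝ) {t : ℝ} (ht : 0 < t) (k : ℕ) :
    |abelCoeff a t k / k !| ≤ exp (|a| / t) * (t * exp 1) ^ k := by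
  have hexp : (|a| / t + k) ^ k / k ! ≤ exp (|a| / t + k) :=
    Real.pow_div_factorial_le_exp _ (by positivity) k
  calc |abelCoeff a t k / k !| ≤ (|a| + t * k) ^ k / k ! := by
        rw [abs_div, Nat.abs_cast]
        gcongr
        exact abs_abelCoeff_le a ht.le k
    _ = t ^ k * ((|a| / t + k) ^ k / k !) := by
        rw [← mul_div_assoc, ← mul_pow]
        congr 2
        field_simp
    _ ≤ t ^ k * exp (|a| / t + k) := by gcongr
    _ = exp (|a| / t) * (t * exp 1) ^ k := by
        rw [exp_add, mul_pow, ← exp_nat_mul, mul_one]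
        ring

lemma summable_abs_abelCoeff_div_factorial_mul_pow (a : ℝ) {t x : ℝ} (ht : 0 < t) (hx : 0 ≤ x)
    (htx : t * exp 1 * x < 1) : Summable fun k => |abelCoeff a t k / k !| * x ^ k := by
  refine Summable.of_nonneg_of_le (fun k => by positivity) (fun k => ?_)
    ((summable_geometric_of_lt_one (by positivity) htx).mul_left (exp (|a| / t)))
  rw [mul_pow, ← mul_assoc]
  gcongr
  exact abs_abelCoeff_div_factorial_le a ht k

lemma analyticAt_abelSeries (a : ℝ) {t x : ℝ} (ht : 0 < t) (htx : t * exp 1 * |x| < 1) :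
    AnalyticAt ℝ (abelSeries a t) x := by
  set p := FormalMultilinearSeries.ofScalars ℝ fun k => abelCoeff a t k / (k ! : ℝ)
  have hp : abelSeries a t = p.sum := funext fun x => by
    simp [abelSeries, p, FormalMultilinearSeries.sum, mul_comm]
  set R : NNReal := ⟨(t * exp 1)⁻¹, by positivity⟩
  have hR_coe : (R : ℝ) = (t * exp 1)⁻¹ := rfl
  have hR : (R : ENNReal) ≤ p.radius := by
    refine p.le_radius_of_bound (exp (|a| / t)) fun k => ?_
    rw [FormalMultilinearSeries.ofScalars_norm, Real.norm_eq_abs]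
    calc |abelCoeff a t k / k !| * (R : ℝ) ^ k
        ≤ exp (|a| / t) * (t * exp 1) ^ k * (R : ℝ) ^ k := by
          gcongr
          exact abs_abelCoeff_div_factorial_le a ht k
      _ = exp (|a| / t) := by
          rw [mul_assoc, ← mul_pow, hR_coe, mul_inv_cancel₀ (by positivity), one_pow, mul_one]
  rw [hp]
  refine p.analyticOnNhd x (lt_of_lt_of_le ?_ hR)
  rw [edist_zero_right, enorm_lt_coe, ← NNReal.coe_lt_coe, coe_nnnorm, hR_coe, Real.norm_eq_abs,
    ← one_div, lt_div_iff₀ (by positivity)]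
  linarith

lemma abelSeries_eq_exp_of_small (a : ℝ) {t d : ℝ} (ht : 0 < t)
    (hd : t * exp 1 * (|d| * exp (t * |d|)) < 1) :
    abelSeries a t (d * exp (-(t * d))) = exp (a * d) := by
  set f : ℕ × ℕ → ℝ := fun p =>
    abelCoeff a t p.1 / (p.1 ! : ℝ) * d ^ p.1 * ((p.1 * -(t * d)) ^ p.2 / (p.2 ! : ℝ))
  have hrow (k : ℕ) :
      HasSum (fun j => f (k, j)) (abelCoeff a t k / k ! * (d * exp (-(t * d))) ^ k) := by
    rw [mul_pow, ← exp_nat_mul, ← mul_assoc]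
    exact (hasSum_pow_div_factorial_exp _).mul_left _
  have hrow_abs (k : ℕ) : HasSum (fun j => |f (k, j)|)
      (|abelCoeff a t k / k !| * (|d| * exp (t * |d|)) ^ k) := by
    rw [mul_pow, ← exp_nat_mul, ← mul_assoc]
    refine ((hasSum_pow_div_factorial_exp _).mul_left _).congr_fun fun j => ?_
    simp only [f, abs_mul, abs_div, abs_pow, abs_neg, Nat.abs_cast, abs_of_pos ht]
  have hf : Summable f := by
    refine Summable.of_abs ((summable_prod_of_nonneg fun p => abs_nonneg _).2
      ⟨fun k => (hrow_abs k).summable, ?_⟩)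
    simp only [(hrow_abs _).tsum_eq]
    exact summable_abs_abelCoeff_div_factorial_mul_pow a ht (by positivity) hd
  have hdiag (n : ℕ) : ∑ p ∈ antidiagonal n, f p = (a * d) ^ n / n ! := by
    rw [Nat.sum_antidiagonal_eq_sum_range_succ_mk]
    calc ∑ k ∈ range (n + 1), f (k, n - k)
        = ∑ k ∈ range (n + 1),
            d ^ n / n ! * (n.choose k * abelCoeff a t k * (0 - t * k) ^ (n - k)) := by
          refine sum_congr rfl fun k hk => ?_
          obtain ⟨m, rfl⟩ := Nat.exists_eq_add_of_le (Nat.lt_succ_iff.mp (mem_range.mp hk))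
          simp only [f, Nat.cast_choose ℝ (Nat.le_add_right k m), Nat.add_sub_cancel_left]
          rw [show k * -(t * d) = (0 - t * k) * d by ring, mul_pow, pow_add]
          field_simp
      _ = (a * d) ^ n / n ! := by
          rw [← mul_sum, sum_choose_mul_abelCoeff_mul_sub_pow, add_zero]
          ring
  have h1 := hf.hasSum.prod_fiberwise hrow
  have h2 := hf.hasSum.sum_antidiagonal
  simp only [hdiag] at h2
  rw [abelSeries, h1.tsum_eq, h2.unique (hasSum_pow_div_factorial_exp (a * d))]

lemma mul_exp_one_mul_abs_mul_exp_neg_lt_one {t d : ℝ} (hd : 0 ≤ d) (htd : t * d < 1) :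
    t * exp 1 * |d * exp (-(t * d))| < 1 := by
  rw [abs_of_nonneg (by positivity)]
  linarith [mul_exp_one_mul_exp_neg_lt_one htd.ne]

theorem abelSeries_eq_exp (a : ℝ) {t d : ℝ} (ht : 0 < t) (hd : 0 ≤ d) (htd : t * d < 1) :
    abelSeries a t (d * exp (-(t * d))) = exp (a * d) := by
  have hmem {d : ℝ} : d ∈ Set.Ico 0 (1 / t) ↔ 0 ≤ d ∧ t * d < 1 := by
    rw [Set.mem_Ico, lt_div_iff₀ ht, mul_comm]
  have hinside : ∀ d ∈ Set.Ico 0 (1 / t), t * exp 1 * |d * exp (-(t * d))| < 1 := fun d hd =>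
    mul_exp_one_mul_abs_mul_exp_neg_lt_one (hmem.1 hd).1 (hmem.1 hd).2
  have hF : AnalyticOnNhd ℝ (fun d => abelSeries a t (d * exp (-(t * d)))) (Set.Ico 0 (1 / t)) :=
    fun d hd => (analyticAt_abelSeries a ht (hinside d hd)).comp (f := fun d => d * exp (-(t * d)))
      (by fun_prop)
  have hG : AnalyticOnNhd ℝ (fun d => exp (a * d)) (Set.Ico 0 (1 / t)) := fun d _ => by fun_prop
  have hsmall : ∀ᶠ d in 𝓝 0, abelSeries a t (d * exp (-(t * d))) = exp (a * d) := by
    have hopen : IsOpen {d : ℝ | t * exp 1 * (|d| * exp (t * |d|)) < 1} :=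
      isOpen_lt (by fun_prop) continuous_const
    filter_upwards [hopen.mem_nhds (by simp)] with d hd using abelSeries_eq_exp_of_small a ht hd
  exact hF.eqOn_of_preconnected_of_eventuallyEq hG isPreconnected_Ico (hmem.2 ⟨le_rfl, by simp⟩)
    hsmall (hmem.2 ⟨hd, htd⟩)

theorem hasSum_abelCoeff (a : ℝ) {t d : ℝ} (ht : 0 < t) (hd : 0 ≤ d) (htd : t * d < 1) :
    HasSum (fun k => abelCoeff a t k / k ! * (d * exp (-(t * d))) ^ k) (exp (a * d)) := by
  have hsum := summable_abs_abelCoeff_div_factorial_mul_pow a ht (abs_nonneg _)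
    (mul_exp_one_mul_abs_mul_exp_neg_lt_one hd htd)
  rw [← abelSeries_eq_exp a ht hd htd]
  refine (hsum.of_norm_bounded fun k => ?_).hasSum
  rw [norm_mul, norm_pow, Real.norm_eq_abs, Real.norm_eq_abs]

lemma abelCoeff_one (t : ℝ) (k : ℕ) : abelCoeff 1 t k = (1 + t * k) ^ ((k : ℤ) - 1) := by
  cases k with
  | zero => simp [abelCoeff]
  | succ k => simp [abelCoeff]

lemma abelCoeff_add_self_div {t : ℝ} (ht : t + 1 ≠ 0) (k : ℕ) :
    abelCoeff (t + 1) t k / (t + 1) / k ! =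
      (k + 1 : ℕ) * (1 + t * (k + 1 : ℕ)) ^ (((k + 1 : ℕ) : ℤ) - 2) / (k + 1)! := by
  have hk : ((k + 1)! : ℝ) = (k + 1) * k ! := by push_cast [Nat.factorial_succ]; ring
  cases k with
  | zero => simp [abelCoeff, add_comm]
  | succ k =>
    rw [hk, abelCoeff, show ((k + 1 + 1 : ℕ) : ℤ) - 2 = (k : ℕ) by push_cast; ring,
      zpow_natCast]
    push_cast
    field_simp
    ring

theorem hasSum_zpow_sub_two_mul_pow_mul_exp {t d : ℝ} (ht : 0 < t) (hd : 0 ≤ d)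
    (htd : t * d < 1) :
    HasSum (fun k : ℕ => (1 + t * k) ^ ((k : ℤ) - 2) * d ^ k * exp (-(d * (1 + t * k))) / k !)
      (1 - t * d / (t + 1)) := by
  set x := d * exp (-(t * d))
  set b : ℕ → ℝ := fun k => k * (1 + t * k) ^ ((k : ℤ) - 2) / k ! * x ^ k with hb
  have hA := hasSum_abelCoeff 1 ht hd htd
  have hB : HasSum b (x / (t + 1) * exp ((t + 1) * d)) := by
    have h : HasSum (fun k => b (k + 1)) (x / (t + 1) * exp ((t + 1) * d)) :=
      ((hasSum_abelCoeff (t + 1) ht hd htd).mul_left _).congr_fun fun k => by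
        simp only [hb]
        rw [← abelCoeff_add_self_div (by positivity)]
        ring
    simpa [b] using (hasSum_nat_add_iff (f := b) 1).1 h
  have hterm (k : ℕ) : (1 + t * k) ^ ((k : ℤ) - 2) * d ^ k * exp (-(d * (1 + t * k))) / k ! =
      exp (-d) * (abelCoeff 1 t k / k ! * x ^ k - t * b k) := by
    have hs : (1 + t * k) ^ ((k : ℤ) - 1) = (1 + t * k) ^ ((k : ℤ) - 2) * (1 + t * k) := by
      rw [← zpow_add_one₀ (by positivity)]
      ring_nf
    simp only [hb]
    rw [abelCoeff_one, hs, mul_pow, ← exp_nat_mul,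
      show -(d * (1 + t * k)) = -d + k * -(t * d) by ring, exp_add]
    ring
  have hval : exp (-d) * (exp (1 * d) - t * (x / (t + 1) * exp ((t + 1) * d))) =
      1 - t * d / (t + 1) := by
    have h1 : exp (-d) * exp (1 * d) = 1 := by rw [← exp_add]; simp
    have h2 : exp (-d) * exp (-(t * d)) * exp ((t + 1) * d) = 1 := by
      rw [← exp_add, ← exp_add]; ring_nf; exact exp_zero
    linear_combination h1 - (t * d / (t + 1)) * h2
  have h := (hA.sub (hB.mul_left t)).mul_left (exp (-d))
  rw [hval] at h
  exact h.congr_fun hterm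

/-- for `r ≥ 2` and `0 ≤ d` with `(r−1)d < 1`,
`Σ_{k=0}^∞ π_{k,r,d}/(1+(r−1)k) = 1 − (r−1)d/r`; equivalently
`Σ_{k=0}^∞ (1+(r−1)k)^{k−2}·d^k·e^{−d(1+(r−1)k)}/k! = 1 − (r−1)d/r`. -/
theorem stmt6 (r : ℕ) (hr : 2 ≤ r) (d : ℝ) (hd : 0 ≤ d) (hd1 : ((r : ℝ) - 1) * d < 1) :
    (∑' k : ℕ, pik r k d / ((1 + (r - 1) * k : ℕ) : ℝ)) = 1 - ((r : ℝ) - 1) * d / r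
    ∧ (∑' k : ℕ, ((1 + (r - 1) * k : ℕ) : ℝ) ^ ((k : ℤ) - 2) * d ^ k *
          Real.exp (-(d * ((1 + (r - 1) * k : ℕ) : ℝ))) / (Nat.factorial k))
        = 1 - ((r : ℝ) - 1) * d / r := by
  set t : ℝ := ((r - 1 : ℕ) : ℝ) with ht_def
  have hrt : (r : ℝ) = t + 1 := by rw [ht_def, Nat.cast_sub (by omega)]; ring
  have hcast (k : ℕ) : ((1 + (r - 1) * k : ℕ) : ℝ) = 1 + t * k := by push_cast; rfl
  have ht : 0 < t := by rw [ht_def]; exact_mod_cast (by omega : 0 < r - 1)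
  have hsum := hasSum_zpow_sub_two_mul_pow_mul_exp ht hd (by rwa [hrt, add_sub_cancel_right] at hd1)
  have hdiv (k : ℕ) : pik r k d / ((1 + (r - 1) * k : ℕ) : ℝ) =
      (1 + t * k) ^ ((k : ℤ) - 2) * d ^ k * exp (-(d * (1 + t * k))) / k ! := by
    rw [pik, hcast, show (k : ℤ) - 1 = (k : ℤ) - 2 + 1 by ring, zpow_add_one₀ (by positivity)]
    field_simp
  rw [tsum_congr hdiv]
  simp only [hcast, hrt, add_sub_cancel_right, hsum.tsum_eq, and_self]
end

section
/- Fix an integer r ≥ 2, let d = d(n) satisfy d(n) → ∞ and log n − d(n) → ∞ as n → ∞, set p = p(n) = d(n)·(r−1)!/n^{r−1}, and set s_1 = s_1(n) = 100·max(n·e^{−d}, log n). Then Pr(L1(H^r(n,p)) ≤ n − s_1) = o(n^{−100}) as n → ∞. -/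
open Finset Filter Real

abbrev Edge (r n : ℕ) : Type := {A : Finset (Fin n) // A.card = r}

abbrev Config (r n : ℕ) : Type := Edge r n → Bool

noncomputable def pweight (r n : ℕ) (p : ℝ) (ω : Config r n) : ℝ :=
  ∏ e : Edge r n, (if ω e then p else 1 - p)

open Classical in
noncomputable def prob (r n : ℕ) (p : ℝ) (E : Set (Config r n)) : ℝ :=
  ∑ ω : Config r n, if ω ∈ E then pweight r n p ω else 0

noncomputable def expect (r n : ℕ) (p : ℝ) (f : Config r n → ℝ) : ℝ :=
  ∑ ω : Config r n, pweight r n p ω * f ω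

noncomputable def pvar (r n : ℕ) (p : ℝ) (f : Config r n → ℝ) : ℝ :=
  expect r n p (fun ω => (f ω - expect r n p f)^2)

def Touch (r n : ℕ) (ω : Config r n) (u v : Fin n) : Prop :=
  ∃ e : Edge r n, ω e = true ∧ u ∈ e.val ∧ v ∈ e.val

open Classical in
noncomputable def component (r n : ℕ) (ω : Config r n) (v : Fin n) : Finset (Fin n) :=
  Finset.univ.filter (fun u => Relation.EqvGen (Touch r n ω) u v)

noncomputable def components (r n : ℕ) (ω : Config r n) : Finset (Finset (Fin n)) :=
  Finset.univ.image (component r n ω)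

noncomputable def L1 (r n : ℕ) (ω : Config r n) : ℕ :=
  Finset.univ.sup (fun v => (component r n ω v).card)

open Classical in
noncomputable def compEdgeCount (r n : ℕ) (ω : Config r n) (C : Finset (Fin n)) : ℕ :=
  (Finset.univ.filter (fun e : Edge r n => ω e = true ∧ e.val ⊆ C)).card

open Classical in
noncomputable def M1 (r n : ℕ) (ω : Config r n) : ℕ :=
  if h : (Finset.univ.filter (fun v : Fin n => (component r n ω v).card = L1 r n ω)).Nonempty
  then compEdgeCount r n ω (component r n ω ((Finset.univ.filter
      (fun v : Fin n => (component r n ω v).card = L1 r n ω)).min' h))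
  else 0

/-!
If `L1 ≤ n - s₁`, some union `A` of components satisfies `⌈s₁⌉ ≤ |A| ≤ n/2` (the complement
of a giant component, or a minimal union of components of size at least `n/4`, or its
complement). No edge of `H` crosses `A`, while at least `|A| · C(n-|A|, r-1)` edges could, so a
union bound over `A` gives
`∑_k C(n,k) (1-p)^(k C(n-k, r-1)) ≤ ∑_k exp (k (1 + log (n/k) - p C(n-k, r-1)))`.
When `k d² ≤ n` we have `p C(n-k, r-1) ≥ d - 1` by Bernoulli's inequality and
`log (n/k) ≤ d - log 100` because `k ≥ 100 n e^(-d)`; when `k d² > n` we have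
`p C(n-k, r-1) ≥ d / 3^(r-1)`, which beats `log (n/k) ≤ 2 log d`. Either way every term is at
most `n^(-200)`.
-/

section Probability

variable {r n : ℕ} {p : ℝ}

lemma pweight_nonneg (hp0 : 0 ≤ p) (hp1 : p ≤ 1) (ω : Config r n) : 0 ≤ pweight r n p ω :=
  prod_nonneg fun e _ => by split <;> linarith

open Classical in
lemma prob_nonneg (hp0 : 0 ≤ p) (hp1 : p ≤ 1) (E : Set (Config r n)) : 0 ≤ prob r n p E :=
  sum_nonneg fun ω _ => ite_nonneg (pweight_nonneg hp0 hp1 ω) le_rfl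

lemma prob_le_sum_prob (hp0 : 0 ≤ p) (hp1 : p ≤ 1) {ι : Type*} (𝒜 : Finset ι)
    (E : Set (Config r n)) (F : ι → Set (Config r n)) (hE : E ⊆ ⋃ A ∈ 𝒜, F A) :
    prob r n p E ≤ ∑ A ∈ 𝒜, prob r n p (F A) := by
  classical
  simp only [prob]
  rw [sum_comm]
  refine sum_le_sum fun ω _ => ?_
  split_ifs with hω
  · obtain ⟨A, hA, hωA⟩ := Set.mem_iUnion₂.mp (hE hω)
    refine le_of_eq_of_le (if_pos hωA).symm (single_le_sum
      (f := fun B => if ω ∈ F B then pweight r n p ω else 0) (fun B _ => ?_) hA)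
    exact ite_nonneg (pweight_nonneg hp0 hp1 ω) le_rfl
  · exact sum_nonneg fun B _ => ite_nonneg (pweight_nonneg hp0 hp1 ω) le_rfl

lemma prob_forall_eq_false (S : Finset (Edge r n)) :
    prob r n p {ω | ∀ e ∈ S, ω e = false} = (1 - p) ^ S.card := by
  classical
  let g : Edge r n → Bool → ℝ := fun e b =>
    if (e ∈ S → b = false) then (if b then p else 1 - p) else 0
  calc prob r n p {ω | ∀ e ∈ S, ω e = false}
      = ∑ ω : Config r n, ∏ e, g e (ω e) := by
        simp only [prob, pweight, g, Fintype.prod_ite_zero, Set.mem_ofPred]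
    _ = ∏ e : Edge r n, (if e ∈ S then 1 - p else 1) := by
        rw [← Fintype.prod_sum]
        refine prod_congr rfl fun e _ => ?_
        by_cases he : e ∈ S <;> simp [g, he]
    _ = (1 - p) ^ S.card := by rw [prod_ite_mem, univ_inter, prod_const]

end Probability

section Saturated

variable {r n : ℕ} {ω : Config r n}

def IsSaturated (r n : ℕ) (ω : Config r n) (A : Finset (Fin n)) : Prop :=
  ∀ ⦃u v⦄, Relation.EqvGen (Touch r n ω) u v → v ∈ A → u ∈ A

def crossing (r n : ℕ) (A : Finset (Fin n)) : Finset (Edge r n) :=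
  univ.filter fun e => (e.val ∩ A).Nonempty ∧ (e.val \ A).Nonempty

lemma isSaturated_univ (ω : Config r n) : IsSaturated r n ω univ :=
  fun _ _ _ _ => mem_univ _

lemma IsSaturated.compl {A : Finset (Fin n)} (hA : IsSaturated r n ω A) :
    IsSaturated r n ω Aᶜ := by
  intro u v huv hv
  rw [mem_compl] at hv ⊢
  exact fun hu => hv (hA huv.symm hu)

lemma mem_component {u v : Fin n} :
    u ∈ component r n ω v ↔ Relation.EqvGen (Touch r n ω) u v := by
  simp [component]

lemma isSaturated_component (ω : Config r n) (v : Fin n) :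
    IsSaturated r n ω (component r n ω v) :=
  fun _ _ hab hb => mem_component.mpr (hab.trans _ _ _ (mem_component.mp hb))

lemma mem_component_self (ω : Config r n) (v : Fin n) : v ∈ component r n ω v :=
  mem_component.mpr (.refl v)

lemma IsSaturated.component_subset {X : Finset (Fin n)} (hX : IsSaturated r n ω X)
    {v : Fin n} (hv : v ∈ X) : component r n ω v ⊆ X :=
  fun _ hu => hX (mem_component.mp hu) hv

lemma IsSaturated.sdiff {A B : Finset (Fin n)} (hA : IsSaturated r n ω A)
    (hB : IsSaturated r n ω B) : IsSaturated r n ω (A \ B) := by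
  intro u v huv hv
  rw [Finset.mem_sdiff] at hv ⊢
  exact ⟨hA huv hv.1, fun hu => hv.2 (hB huv.symm hu)⟩

lemma card_component_le_L1 (ω : Config r n) (v : Fin n) :
    (component r n ω v).card ≤ L1 r n ω :=
  le_sup (f := fun v => (component r n ω v).card) (mem_univ v)

lemma IsSaturated.eq_false_of_mem_crossing {A : Finset (Fin n)} (hA : IsSaturated r n ω A)
    {e : Edge r n} (he : e ∈ crossing r n A) : ω e = false := by
  obtain ⟨⟨u, hu⟩, ⟨w, hw⟩⟩ := (mem_filter.mp he).2
  rw [mem_inter] at hu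
  rw [Finset.mem_sdiff] at hw
  by_contra hωe
  exact hw.2 (hA (.rel _ _ ⟨e, Bool.not_eq_false _ ▸ hωe, hw.1, hu.1⟩) hu.2)

end Saturated

lemma card_mul_choose_le_card_crossing {r n : ℕ} (hr : 2 ≤ r) (A : Finset (Fin n)) :
    A.card * Aᶜ.card.choose (r - 1) ≤ (crossing r n A).card := by
  classical
  set P := A ×ˢ Aᶜ.powersetCard (r - 1)
  have hP : ∀ q ∈ P, q.1 ∈ A ∧ q.2 ⊆ Aᶜ ∧ q.2.card = r - 1 := fun q hq => by
    simpa only [P, mem_product, mem_powersetCard] using hq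
  have hinsert : ∀ q ∈ P, insert q.1 q.2 ∩ A = {q.1} ∧ insert q.1 q.2 \ A = q.2 := by
    intro q hq
    obtain ⟨hv, hB, -⟩ := hP q hq
    have hBA : Disjoint q.2 A := disjoint_of_subset_left hB disjoint_compl_left
    rw [insert_inter_of_mem hv, disjoint_iff_inter_eq_empty.mp hBA,
      Finset.insert_sdiff_of_mem _ hv, sdiff_eq_self_of_disjoint hBA]
    exact ⟨rfl, rfl⟩
  have hinj : Set.InjOn (fun q : Fin n × Finset (Fin n) => insert q.1 q.2) P := by
    intro q hq q' hq' heq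
    have h₁ := congrArg (· ∩ A) heq
    have h₂ := congrArg (· \ A) heq
    simp only [(hinsert q hq).1, (hinsert q' hq').1, (hinsert q hq).2, (hinsert q' hq').2,
      singleton_inj] at h₁ h₂
    exact Prod.ext h₁ h₂
  have hsub : P.image (fun q => insert q.1 q.2) ⊆ (crossing r n A).map (.subtype _) := by
    simp only [subset_iff, mem_image, Finset.mem_map, Function.Embedding.subtype_apply]
    rintro _ ⟨q, hq, rfl⟩
    obtain ⟨hv, hB, hcard⟩ := hP q hq
    have hvB : q.1 ∉ q.2 := fun h => mem_compl.mp (hB h) hv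
    refine ⟨⟨insert q.1 q.2, by rw [card_insert_of_notMem hvB, hcard]; omega⟩, ?_, rfl⟩
    simp only [crossing, mem_filter, mem_univ, true_and, (hinsert q hq).1, (hinsert q hq).2]
    exact ⟨singleton_nonempty _, card_pos.mp (by omega)⟩
  calc A.card * Aᶜ.card.choose (r - 1) = (P.image fun q => insert q.1 q.2).card := by
        rw [card_image_of_injOn hinj, card_product, card_powersetCard]
    _ ≤ (crossing r n A).card := (card_le_card hsub).trans_eq (card_map _)

lemma exists_isSaturated_of_L1_add_le {r n t : ℕ} (ω : Config r n) (ht : 4 * t ≤ n)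
    (hL : L1 r n ω + t ≤ n) :
    ∃ A : Finset (Fin n), IsSaturated r n ω A ∧ t ≤ A.card ∧ 2 * A.card ≤ n := by
  classical
  by_cases hbig : n < 2 * L1 r n ω
  · obtain ⟨v, -, hv⟩ := exists_mem_eq_sup univ (univ_nonempty_iff.mpr ⟨⟨0, by omega⟩⟩)
      fun v => (component r n ω v).card
    refine ⟨(component r n ω v)ᶜ, (isSaturated_component ω v).compl, ?_⟩
    rw [card_compl, Fintype.card_fin]
    change L1 r n ω = _ at hv
    omega
  obtain ⟨X, hX, hXmin⟩ := exists_min_image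
    (univ.filter fun X => IsSaturated r n ω X ∧ n ≤ 4 * X.card) card
    ⟨univ, mem_filter.mpr
      ⟨mem_univ _, isSaturated_univ ω, by rw [card_univ, Fintype.card_fin]; omega⟩⟩
  simp only [mem_filter, mem_univ, true_and, and_imp] at hX hXmin
  by_cases hX2 : 2 * X.card ≤ n
  · exact ⟨X, hX.1, by omega, hX2⟩
  -- Removing one component from `X` must break `n ≤ 4 |X|`, so `|X| < n/4 + L1 ≤ 3n/4`.
  obtain ⟨v, hv⟩ : X.Nonempty := card_pos.mp (by omega)
  have hY := hX.1.component_subset hv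
  have hsmall : ¬ n ≤ 4 * (X \ component r n ω v).card := fun h => by
    have := hXmin _ (hX.1.sdiff (isSaturated_component ω v)) h
    have := card_lt_card (sdiff_ssubset hY ⟨v, mem_component_self ω v⟩)
    omega
  rw [card_sdiff_of_subset hY] at hsmall
  have := card_component_le_L1 ω v
  refine ⟨Xᶜ, hX.1.compl, ?_⟩
  rw [card_compl, Fintype.card_fin]
  omega

lemma choose_le_exp {n k : ℕ} (hn : 0 < n) (hk : 0 < k) :
    (n.choose k : ℝ) ≤ exp (k * (1 + log n - log k)) := by
  have hn' : (0 : ℝ) < n := by exact_mod_cast hn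
  have hk' : (0 : ℝ) < k := by exact_mod_cast hk
  calc (n.choose k : ℝ) ≤ (n : ℝ) ^ k / k.factorial := Nat.choose_le_pow_div k n
    _ = (n / k : ℝ) ^ k * ((k : ℝ) ^ k / k.factorial) := by
        rw [div_pow, div_mul_div_comm, mul_comm ((k : ℝ) ^ k),
          mul_div_mul_right _ _ (by positivity)]
    _ ≤ (n / k : ℝ) ^ k * exp k := by gcongr; exact pow_div_factorial_le_exp _ hk'.le k
    _ = exp (k * (1 + log n - log k)) := by
        rw [← exp_log (div_pos hn' hk'), ← exp_nat_mul, ← exp_add, log_div hn'.ne' hk'.ne']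
        ring_nf

lemma one_sub_pow_le_exp_neg {p : ℝ} (hp : p ≤ 1) (m : ℕ) : (1 - p) ^ m ≤ exp (-(p * m)) :=
  calc (1 - p) ^ m ≤ exp (-p) ^ m := pow_le_pow_left₀ (by linarith) (one_sub_le_exp_neg p) m
    _ = exp (-(p * m)) := by rw [← exp_nat_mul]; ring_nf

lemma mul_div_pow_le_mul_factorial_div_pow_mul_choose {d : ℝ} (hd : 0 ≤ d) (j m n : ℕ) :
    d * (((m + 1 - j : ℕ) : ℝ) / n) ^ j ≤ d * j.factorial / (n : ℝ) ^ j * m.choose j := by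
  have h := Nat.pow_le_choose (α := ℝ) j m
  rw [div_le_iff₀ (by positivity)] at h
  calc d * (((m + 1 - j : ℕ) : ℝ) / n) ^ j
        = d / (n : ℝ) ^ j * ((m + 1 - j : ℕ) : ℝ) ^ j := by rw [div_pow]; ring
    _ ≤ d / (n : ℝ) ^ j * (m.choose j * j.factorial) := by gcongr
    _ = d * j.factorial / (n : ℝ) ^ j * m.choose j := by ring

lemma four_le_log_hundred : (4 : ℝ) ≤ log 100 :=
  calc (4 : ℝ) ≤ 6 * log 2 := by linarith [log_two_gt_d9]
    _ = log (2 ^ 6) := by rw [log_pow]; norm_num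
    _ ≤ log 100 := log_le_log (by norm_num) (by norm_num)

section Exponent

variable {r n k : ℕ} {d p : ℝ}

lemma exponent_le_neg_two_of_mul_sq_le (hr : 2 ≤ r)
    (hp : p = d * (r - 1).factorial / (n : ℝ) ^ (r - 1)) (hdr : 2 * r ≤ d)
    (hn : 2 * r ^ 2 * d ≤ n) (hkd : k * d ^ 2 ≤ n) (hk : 100 * n * exp (-d) ≤ k)
    (hkr : k + r ≤ n) :
    1 + log n - log k - p * (n - k).choose (r - 1) ≤ -2 := by
  have hr' : (2 : ℝ) ≤ r := by exact_mod_cast hr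
  have hkr' : (k : ℝ) + r ≤ n := by exact_mod_cast hkr
  have hn0 : (0 : ℝ) < n := by linarith [k.cast_nonneg (α := ℝ)]
  have hk0 : (0 : ℝ) < k := lt_of_lt_of_le (by positivity) hk
  set x := ((k : ℝ) + r) / n
  have hx1 : x ≤ 1 := (div_le_one hn0).mpr hkr'
  have hx : 1 - x ≤ ((n - k + 1 - (r - 1) : ℕ) : ℝ) / n := by
    rw [one_sub_div hn0.ne']
    gcongr
    rw [show n - k + 1 - (r - 1) = n - (k + r) + 2 by omega]
    push_cast [Nat.cast_sub hkr]
    linarith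
  have hd : 0 ≤ d := by linarith
  have hpC : d * (1 - x) ^ (r - 1) ≤ p * (n - k).choose (r - 1) := by
    rw [hp]
    refine le_trans ?_ (mul_div_pow_le_mul_factorial_div_pow_mul_choose hd (r - 1) (n - k) n)
    gcongr
  have hbern : 1 - ((r : ℝ) - 1) * x ≤ (1 - x) ^ (r - 1) := by
    have := one_add_mul_le_pow (a := -x) (by linarith [show 0 ≤ x by positivity]) (r - 1)
    rw [Nat.cast_pred (by omega), ← sub_eq_add_neg] at this
    linarith
  have hdx : d * ((r : ℝ) - 1) * x ≤ 1 := by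
    rw [mul_div_assoc', div_le_one hn0]
    nlinarith [mul_le_mul_of_nonneg_left (show (r : ℝ) - 1 ≤ d / 2 by linarith) hd]
  have hlog : log n - log k ≤ d - log 100 := by
    have := log_le_log (by positivity) hk
    rw [log_mul (by positivity) (exp_ne_zero _), log_mul (by norm_num) hn0.ne', log_exp] at this
    linarith
  nlinarith [four_le_log_hundred, mul_le_mul_of_nonneg_left hbern hd]

lemma exponent_le_neg_one_of_lt_mul_sq (hp : p = d * (r - 1).factorial / (n : ℝ) ^ (r - 1))
    (hd : 0 < d) (hD : 1 + 2 * log d - d / 3 ^ (r - 1) ≤ -1) (hn : 6 * r ≤ n)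
    (hkd : n < k * d ^ 2) (hk : 2 * k ≤ n) :
    1 + log n - log k - p * (n - k).choose (r - 1) ≤ -1 := by
  have hk0 : (0 : ℝ) < k := pos_of_mul_pos_left ((n.cast_nonneg).trans_lt hkd) (by positivity)
  have hn0 : (0 : ℝ) < n := by
    have : (2 : ℝ) * k ≤ n := by exact_mod_cast hk
    linarith
  have hpC : d / 3 ^ (r - 1) ≤ p * (n - k).choose (r - 1) := by
    rw [hp]
    refine le_trans ?_ (mul_div_pow_le_mul_factorial_div_pow_mul_choose hd.le (r - 1) (n - k) n)
    rw [div_eq_mul_one_div d, ← one_div_pow]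
    refine mul_le_mul_of_nonneg_left (pow_le_pow_left₀ (by norm_num) ?_ _) hd.le
    rw [div_le_div_iff₀ (by norm_num) hn0, one_mul]
    exact_mod_cast (by omega : n ≤ (n - k + 1 - (r - 1)) * 3)
  have hlog : log n - log k ≤ 2 * log d := by
    have := log_lt_log hn0 hkd
    rw [log_mul hk0.ne' (by positivity), log_pow] at this
    push_cast at this
    linarith
  linarith

end Exponent

lemma choose_mul_one_sub_pow_le {r n k : ℕ} {d p : ℝ} (hr : 2 ≤ r)
    (hp : p = d * (r - 1).factorial / (n : ℝ) ^ (r - 1)) (hp1 : p ≤ 1)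
    (hdr : 2 * r ≤ d) (hdn : d ≤ log n) (hD : 1 + 2 * log d - d / 3 ^ (r - 1) ≤ -1)
    (hn : 2 * r ^ 2 * d ≤ n) (hnr : 6 * r ≤ n) (hnlog : 200 * log n ^ 3 ≤ n)
    (hk₁ : 100 * log n ≤ k) (hk₂ : 100 * n * exp (-d) ≤ k) (hk : 2 * k ≤ n) :
    n.choose k * (1 - p) ^ (k * (n - k).choose (r - 1)) ≤ ((n : ℝ) ^ 200)⁻¹ := by
  have hr' : (2 : ℝ) ≤ r := by exact_mod_cast hr
  have hn0 : 0 < n := by omega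
  have hk0 : (0 : ℝ) < k := lt_of_lt_of_le (by positivity) hk₂
  set C := (n - k).choose (r - 1)
  have hexp : (k : ℝ) * (1 + log n - log k - p * C) ≤ -(200 * log n) := by
    rcases le_or_gt ((k : ℝ) * d ^ 2) n with hkd | hkd
    · have := exponent_le_neg_two_of_mul_sq_le hr hp hdr hn hkd hk₂ (by omega)
      nlinarith
    · have := exponent_le_neg_one_of_lt_mul_sq hp (by linarith) hD hnr hkd hk
      -- `k > n / d² ≥ n / log² n ≥ 200 log n`
      have : 200 * log n ≤ k := by
        have hd2 : d ^ 2 ≤ log n ^ 2 := pow_le_pow_left₀ (by linarith) hdn 2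
        nlinarith [mul_le_mul_of_nonneg_left hd2 hk0.le]
      nlinarith
  calc (n.choose k : ℝ) * (1 - p) ^ (k * C)
      ≤ exp (k * (1 + log n - log k)) * exp (-(p * ↑(k * C))) :=
        mul_le_mul (choose_le_exp hn0 (by exact_mod_cast hk0)) (one_sub_pow_le_exp_neg hp1 _)
          (pow_nonneg (by linarith) _) (exp_pos _).le
    _ = exp (k * (1 + log n - log k - p * C)) := by rw [← exp_add]; push_cast; ring_nf
    _ ≤ exp (-(200 * log n)) := exp_le_exp.mpr hexp
    _ = ((n : ℝ) ^ 200)⁻¹ := by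
        rw [exp_neg, ← exp_log (x := (n : ℝ) ^ 200) (by positivity), log_pow]
        norm_num

lemma prob_forall_crossing_eq_false_le {r n : ℕ} {p : ℝ} (hr : 2 ≤ r) (hp0 : 0 ≤ p)
    (hp1 : p ≤ 1) (A : Finset (Fin n)) :
    prob r n p {ω | ∀ e ∈ crossing r n A, ω e = false}
      ≤ (1 - p) ^ (A.card * (n - A.card).choose (r - 1)) := by
  rw [prob_forall_eq_false]
  refine pow_le_pow_of_le_one (by linarith) (by linarith) ?_
  simpa [card_compl] using card_mul_choose_le_card_crossing hr A

lemma L1_add_le_subset_iUnion {r n t : ℕ} (ht : 4 * t ≤ n) :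
    {ω : Config r n | L1 r n ω + t ≤ n} ⊆
      ⋃ A ∈ univ.filter (fun A => t ≤ A.card ∧ 2 * A.card ≤ n),
        {ω | ∀ e ∈ crossing r n A, ω e = false} := by
  intro ω hω
  obtain ⟨A, hA, hAt⟩ := exists_isSaturated_of_L1_add_le ω ht hω
  exact Set.mem_biUnion (by simpa using hAt) fun _ => hA.eq_false_of_mem_crossing

lemma prob_L1_le_sub_le {r n : ℕ} {d p s : ℝ} (hr : 2 ≤ r)
    (hp : p = d * (r - 1).factorial / (n : ℝ) ^ (r - 1)) (hp1 : p ≤ 1)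
    (hdr : 2 * r ≤ d) (hdn : d ≤ log n) (hD : 1 + 2 * log d - d / 3 ^ (r - 1) ≤ -1)
    (hn : 2 * r ^ 2 * d ≤ n) (hnr : 6 * r ≤ n) (hnlog : 200 * log n ^ 3 ≤ n)
    (hs₁ : 100 * log n ≤ s) (hs₂ : 100 * n * exp (-d) ≤ s) (hs : 4 * s + 4 ≤ n) :
    prob r n p {ω | (L1 r n ω : ℝ) ≤ n - s} ≤ (n + 1) * ((n : ℝ) ^ 200)⁻¹ := by
  classical
  have hp0 : 0 ≤ p := by
    rw [hp]
    have : (0 : ℝ) ≤ d := by linarith [r.cast_nonneg (α := ℝ)]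
    positivity
  have hs0 : 0 ≤ s := le_trans (by positivity) hs₁
  set t := ⌈s⌉₊
  have hst : s ≤ t := Nat.le_ceil s
  have ht : 4 * t ≤ n := by
    have := Nat.ceil_lt_add_one hs0
    exact_mod_cast (by linarith : (4 * t : ℝ) ≤ n)
  have hevent : {ω : Config r n | (L1 r n ω : ℝ) ≤ n - s} ⊆ {ω | L1 r n ω + t ≤ n} := by
    intro ω hω
    simp only [Set.mem_ofPred] at hω ⊢
    have hL : L1 r n ω ≤ n := by exact_mod_cast (by linarith : (L1 r n ω : ℝ) ≤ n)
    have : t ≤ n - L1 r n ω := by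
      rw [Nat.ceil_le, Nat.cast_sub hL]
      linarith
    omega
  let f : ℕ → ℝ := fun k =>
    if t ≤ k ∧ 2 * k ≤ n then (1 - p) ^ (k * (n - k).choose (r - 1)) else 0
  calc prob r n p {ω | (L1 r n ω : ℝ) ≤ n - s}
      ≤ ∑ A ∈ univ.filter (fun A : Finset (Fin n) => t ≤ A.card ∧ 2 * A.card ≤ n),
          prob r n p {ω | ∀ e ∈ crossing r n A, ω e = false} :=
        prob_le_sum_prob hp0 hp1 _ _ _ (hevent.trans (L1_add_le_subset_iUnion ht))
    _ ≤ ∑ A : Finset (Fin n), f A.card := by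
        rw [sum_filter]
        refine sum_le_sum fun A _ => ?_
        simp only [f]
        split_ifs
        exacts [prob_forall_crossing_eq_false_le hr hp0 hp1 A, le_rfl]
    _ = ∑ k ∈ range (n + 1), n.choose k • f k := by
        rw [← powerset_univ, sum_powerset_apply_card, card_univ, Fintype.card_fin]
    _ ≤ ∑ k ∈ range (n + 1), ((n : ℝ) ^ 200)⁻¹ := sum_le_sum fun k _ => by
        simp only [f, nsmul_eq_mul]
        split_ifs with hk
        · exact choose_mul_one_sub_pow_le hr hp hp1 hdr hdn hD hn hnr hnlog
            (hs₁.trans (hst.trans (by exact_mod_cast hk.1)))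
            (hs₂.trans (hst.trans (by exact_mod_cast hk.1))) hk.2
        · simp only [mul_zero]; positivity
    _ = (n + 1) * ((n : ℝ) ^ 200)⁻¹ := by simp

lemma eventually_mul_log_pow_le (a : ℝ) (m : ℕ) :
    ∀ᶠ n : ℕ in atTop, a * log n ^ m ≤ n := by
  have h := ((isLittleO_pow_log_id_atTop (n := m)).const_mul_left a).comp_tendsto
    tendsto_natCast_atTop_atTop
  filter_upwards [h.bound one_pos] with n hn
  simpa using (le_abs_self _).trans hn

lemma eventually_one_add_two_mul_log_sub_div_le {c : ℝ} (hc : 0 < c) :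
    ∀ᶠ x : ℝ in atTop, 1 + 2 * log x - x / c ≤ -1 := by
  filter_upwards [isLittleO_log_id_atTop.bound (show 0 < 1 / (4 * c) by positivity),
    eventually_ge_atTop (4 * c)] with x hlog hx
  have hx0 : 0 ≤ x := by linarith
  rw [norm_eq_abs, id, norm_of_nonneg hx0] at hlog
  have : 2 * log x ≤ x / (2 * c) := by
    have := (le_abs_self _).trans hlog
    rw [div_mul_eq_mul_div, one_mul] at this
    linarith [show x / (4 * c) * 2 = x / (2 * c) by field_simp; ring]
  have : 2 ≤ x / (2 * c) := by rw [le_div_iff₀ (by positivity)]; linarith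
  linarith [show x / c = 2 * (x / (2 * c)) by field_simp]

lemma isLittleO_succ_mul_inv_pow :
    (fun n : ℕ => ((n : ℝ) + 1) * ((n : ℝ) ^ 200)⁻¹)
      =o[atTop] fun n => ((n : ℝ) ^ 100)⁻¹ := by
  rw [Asymptotics.isLittleO_iff_tendsto (fun n h => by simp_all)]
  have h := tendsto_inv_atTop_nhds_zero_nat (𝕜 := ℝ)
  have hlim := (tendsto_const_nhds (x := (1 : ℝ)).add h).mul (h.pow 99)
  rw [add_zero, zero_pow (by norm_num), mul_zero] at hlim
  refine hlim.congr' ?_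
  filter_upwards [eventually_ne_atTop 0] with n hn
  have : (n : ℝ) ≠ 0 := by exact_mod_cast hn
  field_simp

lemma isBigO_prob_L1_le_sub {r : ℕ} (hr : 2 ≤ r) {d : ℕ → ℝ} (hd : Tendsto d atTop atTop)
    (hld : Tendsto (fun n : ℕ => log n - d n) atTop atTop) {p : ℕ → ℝ}
    (hp : ∀ n, p n = d n * (r - 1).factorial / (n : ℝ) ^ (r - 1)) {s₁ : ℕ → ℝ}
    (hs₁ : ∀ n, s₁ n = 100 * max ((n : ℝ) * exp (-d n)) (log n)) :
    (fun n => prob r n (p n) {ω | (L1 r n ω : ℝ) ≤ n - s₁ n})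
      =O[atTop] fun n => ((n : ℝ) + 1) * ((n : ℝ) ^ 200)⁻¹ := by
  have hr' : (2 : ℝ) ≤ r := by exact_mod_cast hr
  refine Asymptotics.IsBigO.of_bound' ?_
  filter_upwards [hd.eventually_ge_atTop (2 * r), hd.eventually_ge_atTop (log 800),
    hld.eventually_ge_atTop 0,
    hd.eventually (eventually_one_add_two_mul_log_sub_div_le (c := 3 ^ (r - 1)) (by positivity)),
    eventually_mul_log_pow_le (2 * r ^ 2) 1, eventually_mul_log_pow_le 200 3,
    eventually_mul_log_pow_le (r - 1).factorial 1, eventually_mul_log_pow_le 802 1,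
    eventually_ge_atTop (6 * r)] with n hdr hd800 hdn hD hn hnlog hfac hs hnr
  simp only [pow_one] at hn hfac hs
  have hdn : d n ≤ log n := by linarith
  have hn1 : (1 : ℝ) ≤ n := by exact_mod_cast (by omega : 1 ≤ n)
  have hp0 : 0 ≤ p n := by
    rw [hp n]
    have : 0 ≤ d n := by linarith
    positivity
  have hp1 : p n ≤ 1 := by
    rw [hp n, div_le_one (by positivity)]
    calc d n * (r - 1).factorial ≤ (r - 1).factorial * log n := by
          rw [mul_comm]; gcongr
      _ ≤ (n : ℝ) ^ 1 := by rwa [pow_one]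
      _ ≤ (n : ℝ) ^ (r - 1) := pow_le_pow_right₀ hn1 (by omega)
  have hexp : (n : ℝ) * exp (-d n) ≤ n / 800 := by
    have : exp (-d n) ≤ 1 / 800 := by
      rw [one_div, ← exp_log (show (0 : ℝ) < 800 by norm_num), ← exp_neg]
      exact exp_le_exp.mpr (by linarith)
    nlinarith
  rw [norm_of_nonneg (prob_nonneg hp0 hp1 _), norm_of_nonneg (by positivity)]
  refine prob_L1_le_sub_le hr (hp n) hp1 hdr hdn hD
    (by nlinarith [mul_le_mul_of_nonneg_left hdn (by positivity : (0 : ℝ) ≤ 2 * r ^ 2)])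
    (by exact_mod_cast hnr) hnlog ?_ ?_ ?_ <;> rw [hs₁ n]
  · linarith [le_max_right ((n : ℝ) * exp (-d n)) (log n)]
  · linarith [le_max_left ((n : ℝ) * exp (-d n)) (log n)]
  · linarith [max_le_add_of_nonneg (by positivity : 0 ≤ (n : ℝ) * exp (-d n))
      (by linarith : 0 ≤ log (n : ℝ))]

/-- With `p = d(n)·(r−1)!/n^{r−1}`, `d(n) → ∞`, `log n − d(n) → ∞`, and
`s₁(n) = 100·max(n·e^{−d}, log n)`, the probability that the largest component of
`H^r(n,p)` has at most `n − s₁` vertices is `o(n^{−100})`. -/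
theorem stmt7 (r : ℕ) (hr : 2 ≤ r) (d : ℕ → ℝ)
    (hd : Tendsto d atTop atTop)
    (hld : Tendsto (fun n : ℕ => Real.log n - d n) atTop atTop)
    (p : ℕ → ℝ) (hp : ∀ n, p n = d n * (Nat.factorial (r - 1)) / (n : ℝ) ^ (r - 1))
    (s₁ : ℕ → ℝ) (hs₁ : ∀ n, s₁ n = 100 * max ((n : ℝ) * Real.exp (-d n)) (Real.log n)) :
    (fun n => prob r n (p n) {ω | (L1 r n ω : ℝ) ≤ (n : ℝ) - s₁ n})
      =o[atTop] (fun n => (((n : ℝ) ^ (100 : ℕ))⁻¹)) :=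
  (isBigO_prob_L1_le_sub hr hd hld hp hs₁).trans_isLittleO isLittleO_succ_mul_inv_pow
end

section
/- Suppose a sequence ((X_n, Y_n)) of ℤ²-valued random variables satisfies a local limit theorem with parameters (μ_X(n), μ_Y(n)) and (σ_X²(n), σ_Y²(n)), where σ_X(n), σ_Y(n) > 0. Suppose μ̃_X(n) = μ_X(n) + o(σ_X(n)), μ̃_Y(n) = μ_Y(n) + o(σ_Y(n)), σ̃_X(n) ~ σ_X(n) and σ̃_Y(n) ~ σ_Y(n) as n → ∞. Then ((X_n, Y_n)) also satisfies a local limit theorem with parameters (μ̃_X(n), μ̃_Y(n)) and (σ̃_X²(n), σ̃_Y²(n)). -/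
open MeasureTheory Filter

/-- The bivariate discrete Gaussian comparison function. -/
noncomputable def gauss2 (μX μY σX σY : ℝ) (x y : ℤ) : ℝ :=
  (1 / (2 * Real.pi * σX * σY)) *
    Real.exp (-((x : ℝ) - μX) ^ 2 / (2 * σX ^ 2) - ((y : ℝ) - μY) ^ 2 / (2 * σY ^ 2))

/-- A sequence `((X_n, Y_n))` of `ℤ²`-valued random variables satisfies a local limit
theorem with parameters `(μX, μY)` and `(σX², σY²)` if
`sup_{(x,y) ∈ ℤ²} |Pr(X_n = x, Y_n = y) − gauss2(...)| = o(1/(σX·σY))`. -/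
def SatisfiesLLT {Ω : ℕ → Type*} [∀ n, MeasurableSpace (Ω n)]
    (μ : ∀ n, Measure (Ω n)) (X Y : ∀ n, Ω n → ℤ)
    (μX μY σX σY : ℕ → ℝ) : Prop :=
  (fun n => ⨆ xy : ℤ × ℤ,
      |(μ n {ω | X n ω = xy.1 ∧ Y n ω = xy.2}).toReal
        - gauss2 (μX n) (μY n) (σX n) (σY n) xy.1 xy.2|)
    =o[atTop] (fun n => 1 / (σX n * σY n))

open Real Asymptotics Topology

/-!
After rescaling by `σ`, the kernel `σ⁻¹ exp (-(x - μ)² / (2σ²))` with parameters `(μ', σ')`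
becomes `c⁻¹ exp (-((u - e) / c)² / 2)`, where `u = (x - μ) / σ`, `e = (μ' - μ) / σ → 0` and
`c = σ' / σ → 1`. This differs from `exp (-u² / 2)` by at most
`|e| + |c⁻² - 1| + |c² - 1| + |1 - c⁻¹|`, uniformly in `u`: the shift by `e` costs `|e|` since
`exp (-u² / 2)` is 1-Lipschitz, and the dilation by `c` raises a value `t ∈ [0, 1]` to the power
`c⁻²`. Since `gauss2` is `(2π)⁻¹` times a product of two such kernels, the old and new Gaussians
differ by `o(1 / (σX σY))` uniformly on `ℤ²`, and `1 / (σX σY) ~ 1 / (σX' σY')`.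
-/

noncomputable def gaussKernel (μ σ x : ℝ) : ℝ := σ⁻¹ * exp (-(x - μ) ^ 2 / (2 * σ ^ 2))

lemma abs_exp_neg_sq_half_sub_le (a b : ℝ) : |exp (-a ^ 2 / 2) - exp (-b ^ 2 / 2)| ≤ |a - b| := by
  have hderiv (w : ℝ) :
      HasDerivAt (fun w => exp (-w ^ 2 / 2)) (-w * exp (-w ^ 2 / 2)) w := by
    have h : HasDerivAt (fun w : ℝ => -w ^ 2 / 2) (-w) w :=
      ((hasDerivAt_pow 2 w).fun_neg.div_const 2).congr_deriv (by norm_num; ring)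
    simpa [mul_comm] using h.exp
  have hbound (w : ℝ) : ‖-w * exp (-w ^ 2 / 2)‖ ≤ 1 := by
    -- `|w| ≤ 1 + w ^ 2 / 2 ≤ exp (w ^ 2 / 2)`
    have h1 : |w| ≤ exp (w ^ 2 / 2) := by
      nlinarith [add_one_le_exp (w ^ 2 / 2), sq_abs w, sq_nonneg (|w| - 1)]
    rw [norm_mul, norm_neg, Real.norm_eq_abs, Real.norm_eq_abs, abs_of_pos (exp_pos _), neg_div,
      exp_neg, ← div_eq_mul_inv, div_le_one (exp_pos _)]
    exact h1
  simpa [Real.norm_eq_abs] using convex_univ.norm_image_sub_le_of_norm_hasDerivWithin_le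
    (fun w _ => (hderiv w).hasDerivWithinAt) (fun w _ => hbound w) (Set.mem_univ b) (Set.mem_univ a)

lemma exp_neg_sub_exp_neg_le_div_sub_one {a b : ℝ} (ha : 0 < a) (hab : a ≤ b) :
    exp (-a) - exp (-b) ≤ b / a - 1 := by
  have h1 : exp (-a) * (1 - (b - a)) ≤ exp (-b) := by
    rw [show -b = -a + -(b - a) by ring, exp_add]
    exact mul_le_mul_of_nonneg_left (one_sub_le_exp_neg _) (exp_pos _).le
  have h2 : a * exp (-a) ≤ 1 :=
    (mul_exp_neg_le_exp_neg_one a).trans (exp_le_one_iff.2 (by norm_num))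
  have h3 : b / a - 1 = (b - a) / a := by field_simp
  rw [h3, le_div_iff₀ ha]
  nlinarith

lemma abs_exp_neg_sub_exp_neg_mul_le {s p : ℝ} (hs : 0 ≤ s) (hp : 0 < p) :
    |exp (-s) - exp (-(p * s))| ≤ |p - 1| + |p⁻¹ - 1| := by
  rcases hs.eq_or_lt with rfl | hs
  · simp only [mul_zero, sub_self, abs_zero]
    positivity
  rcases le_total 1 p with h | h
  · have := exp_neg_sub_exp_neg_le_div_sub_one hs (le_mul_of_one_le_left hs.le h)
    rw [mul_div_cancel_right₀ _ hs.ne'] at this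
    have hle : exp (-(p * s)) ≤ exp (-s) := exp_le_exp.2 (by nlinarith)
    rw [abs_of_nonneg (sub_nonneg.2 hle), abs_of_nonneg (sub_nonneg.2 h)]
    linarith [abs_nonneg (p⁻¹ - 1)]
  · have := exp_neg_sub_exp_neg_le_div_sub_one (mul_pos hp hs) (mul_le_of_le_one_left hs.le h)
    rw [div_mul_cancel_right₀ hs.ne'] at this
    have hle : exp (-s) ≤ exp (-(p * s)) := exp_le_exp.2 (by nlinarith)
    rw [abs_sub_comm, abs_of_nonneg (sub_nonneg.2 hle),
      abs_of_nonneg (sub_nonneg.2 ((one_le_inv₀ hp).2 h))]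
    linarith [abs_nonneg (p - 1)]

lemma abs_exp_sub_inv_mul_exp_le (u e : ℝ) {c : ℝ} (hc : 0 < c) :
    |exp (-u ^ 2 / 2) - c⁻¹ * exp (-((u - e) / c) ^ 2 / 2)|
      ≤ |e| + (|(c ^ 2)⁻¹ - 1| + |c ^ 2 - 1|) + |1 - c⁻¹| := by
  have hE : exp (-((u - e) / c) ^ 2 / 2) = exp (-((c ^ 2)⁻¹ * ((u - e) ^ 2 / 2))) := by
    congr 1; field_simp
  set E := exp (-((u - e) / c) ^ 2 / 2)
  have hE1 : E ≤ 1 := exp_le_one_iff.2 (by nlinarith [sq_nonneg ((u - e) / c)])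
  have h1 := abs_exp_neg_sq_half_sub_le u (u - e)
  have h2 := abs_exp_neg_sub_exp_neg_mul_le (s := (u - e) ^ 2 / 2) (by positivity)
    (inv_pos.2 (pow_pos hc 2))
  rw [inv_inv, ← hE, show -((u - e) ^ 2 / 2) = -(u - e) ^ 2 / 2 by ring] at h2
  have h3 : |(1 - c⁻¹) * E| ≤ |1 - c⁻¹| := by
    rw [abs_mul, abs_of_pos (exp_pos _)]
    exact mul_le_of_le_one_right (abs_nonneg _) hE1
  calc |exp (-u ^ 2 / 2) - c⁻¹ * E|
      = |(exp (-u ^ 2 / 2) - exp (-(u - e) ^ 2 / 2)) + (exp (-(u - e) ^ 2 / 2) - E)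
          + (1 - c⁻¹) * E| := by ring_nf
    _ ≤ _ := by
      refine (abs_add_le _ _).trans (add_le_add ((abs_add_le _ _).trans (add_le_add ?_ h2)) h3)
      simpa using h1

lemma gauss2_eq_mul_gaussKernel (μX μY σX σY : ℝ) (x y : ℤ) :
    gauss2 μX μY σX σY x y = (2 * π)⁻¹ * (gaussKernel μX σX x * gaussKernel μY σY y) := by
  rw [gauss2, gaussKernel, gaussKernel, mul_mul_mul_comm, ← exp_add]
  ring_nf

lemma mul_gaussKernel_self (μ x : ℝ) {σ : ℝ} (hσ : σ ≠ 0) :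
    σ * gaussKernel μ σ x = exp (-((x - μ) / σ) ^ 2 / 2) := by
  rw [gaussKernel, ← mul_assoc, mul_inv_cancel₀ hσ, one_mul]
  congr 1
  field_simp

lemma mul_gaussKernel_le_one (μ x : ℝ) {σ : ℝ} (hσ : σ ≠ 0) : σ * gaussKernel μ σ x ≤ 1 := by
  rw [mul_gaussKernel_self μ x hσ, exp_le_one_iff]
  nlinarith [sq_nonneg ((x - μ) / σ)]

lemma gaussKernel_nonneg (μ x : ℝ) {σ : ℝ} (hσ : 0 ≤ σ) : 0 ≤ gaussKernel μ σ x := by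
  unfold gaussKernel; positivity

lemma mul_abs_gaussKernel_sub_le (μ μ' x : ℝ) {σ σ' : ℝ} (hσ : 0 < σ) (hσ' : 0 < σ') :
    σ * |gaussKernel μ σ x - gaussKernel μ' σ' x|
      ≤ |(μ' - μ) / σ| + (|((σ' / σ) ^ 2)⁻¹ - 1| + |(σ' / σ) ^ 2 - 1|) + |1 - (σ' / σ)⁻¹| := by
  have hscale : σ * gaussKernel μ' σ' x
      = (σ' / σ)⁻¹ * exp (-(((x - μ) / σ - (μ' - μ) / σ) / (σ' / σ)) ^ 2 / 2) := by
    rw [show ((x - μ) / σ - (μ' - μ) / σ) / (σ' / σ) = (x - μ') / σ' by field_simp; ring,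
      ← mul_gaussKernel_self μ' x hσ'.ne', inv_div, ← mul_assoc, div_mul_cancel₀ _ hσ'.ne']
  have h := abs_exp_sub_inv_mul_exp_le ((x - μ) / σ) ((μ' - μ) / σ) (div_pos hσ' hσ)
  rwa [← hscale, ← mul_gaussKernel_self μ x hσ.ne', ← mul_sub, abs_mul, abs_of_pos hσ] at h

lemma eventually_pos_of_tendsto_div {α : Type*} {l : Filter α} {f g : α → ℝ} {c : ℝ}
    (hg : ∀ a, 0 < g a) (h : Tendsto (fun a => f a / g a) l (𝓝 c)) (hc : 0 < c) :
    ∀ᶠ a in l, 0 < f a :=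
  (h.eventually (lt_mem_nhds hc)).mono fun a ha => (div_pos_iff_of_pos_right (hg a)).1 ha

lemma exists_tendsto_zero_mul_abs_gaussKernel_sub_le {μ σ μ' σ' : ℕ → ℝ} (hσ : ∀ n, 0 < σ n)
    (hμ : (fun n => μ' n - μ n) =o[atTop] σ) (hσ' : Tendsto (fun n => σ' n / σ n) atTop (𝓝 1)) :
    ∃ ε : ℕ → ℝ, Tendsto ε atTop (𝓝 0) ∧ ∀ᶠ n in atTop, ∀ x,
      σ n * |gaussKernel (μ n) (σ n) x - gaussKernel (μ' n) (σ' n) x| ≤ ε n := by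
  refine ⟨fun n => |(μ' n - μ n) / σ n| + (|((σ' n / σ n) ^ 2)⁻¹ - 1| + |(σ' n / σ n) ^ 2 - 1|)
    + |1 - (σ' n / σ n)⁻¹|, ?_, ?_⟩
  · have hsq := hσ'.pow 2
    simpa using (hμ.tendsto_div_nhds_zero.abs.add
      (((hsq.inv₀ (by norm_num)).sub_const 1).abs.add (hsq.sub_const 1).abs)).add
      ((hσ'.inv₀ one_ne_zero).const_sub 1).abs
  · filter_upwards [eventually_pos_of_tendsto_div hσ hσ' one_pos] with n hn x
    exact mul_abs_gaussKernel_sub_le _ _ _ (hσ n) hn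

lemma abs_mul_sub_mul_le (a b c d : ℝ) : |a * b - c * d| ≤ |a - c| * |b| + |c| * |b - d| := by
  rw [← abs_mul, ← abs_mul, show a * b - c * d = (a - c) * b + c * (b - d) by ring]
  exact abs_add_le _ _

lemma inv_two_pi_le_one : (2 * π)⁻¹ ≤ 1 :=
  inv_le_one_of_one_le₀ (by linarith [pi_gt_three])

lemma exists_tendsto_zero_abs_gauss2_sub_le {μX μY σX σY μX' μY' σX' σY' : ℕ → ℝ}
    (hσX : ∀ n, 0 < σX n) (hσY : ∀ n, 0 < σY n)
    (hμX : (fun n => μX' n - μX n) =o[atTop] σX) (hμY : (fun n => μY' n - μY n) =o[atTop] σY)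
    (hσX' : Tendsto (fun n => σX' n / σX n) atTop (𝓝 1))
    (hσY' : Tendsto (fun n => σY' n / σY n) atTop (𝓝 1)) :
    ∃ ε : ℕ → ℝ, Tendsto ε atTop (𝓝 0) ∧ ∀ᶠ n in atTop, ∀ x y : ℤ,
      |gauss2 (μX n) (μY n) (σX n) (σY n) x y - gauss2 (μX' n) (μY' n) (σX' n) (σY' n) x y|
        ≤ ε n * (1 / (σX n * σY n)) := by
  obtain ⟨εX, hεX, hX⟩ := exists_tendsto_zero_mul_abs_gaussKernel_sub_le hσX hμX hσX'
  obtain ⟨εY, hεY, hY⟩ := exists_tendsto_zero_mul_abs_gaussKernel_sub_le hσY hμY hσY'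
  refine ⟨fun n => εX n + (σX' n / σX n)⁻¹ * εY n,
    by simpa using hεX.add ((hσX'.inv₀ one_ne_zero).mul hεY), ?_⟩
  filter_upwards [hX, hY, eventually_pos_of_tendsto_div hσX hσX' one_pos] with n hXn hYn hσX'n x y
  set kX := gaussKernel (μX n) (σX n) x
  set kY := gaussKernel (μY n) (σY n) y
  set kX' := gaussKernel (μX' n) (σX' n) x
  set kY' := gaussKernel (μY' n) (σY' n) y
  have hσXY : 0 < σX n * σY n := mul_pos (hσX n) (hσY n)
  have hkX' : |σX n * kX'| ≤ (σX' n / σX n)⁻¹ := by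
    have h : σX n * kX' = σX n / σX' n * (σX' n * kX') := by field_simp
    rw [abs_of_nonneg (mul_nonneg (hσX n).le (gaussKernel_nonneg _ _ hσX'n.le)), h, inv_div]
    exact mul_le_of_le_one_right (div_nonneg (hσX n).le hσX'n.le)
      (mul_gaussKernel_le_one _ _ hσX'n.ne')
  have hkY : |σY n * kY| ≤ 1 := by
    rw [abs_of_nonneg (mul_nonneg (hσY n).le (gaussKernel_nonneg _ _ (hσY n).le))]
    exact mul_gaussKernel_le_one _ _ (hσY n).ne'
  have hdX : |σX n * kX - σX n * kX'| ≤ εX n := by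
    rw [← mul_sub, abs_mul, abs_of_pos (hσX n)]; exact hXn x
  have hdY : |σY n * kY - σY n * kY'| ≤ εY n := by
    rw [← mul_sub, abs_mul, abs_of_pos (hσY n)]; exact hYn y
  have hprod : σX n * σY n * |kX * kY - kX' * kY'| ≤ εX n + (σX' n / σX n)⁻¹ * εY n := by
    calc σX n * σY n * |kX * kY - kX' * kY'|
        = |σX n * kX * (σY n * kY) - σX n * kX' * (σY n * kY')| := by
          rw [← abs_of_pos hσXY, ← abs_mul]; ring_nf
      _ ≤ |σX n * kX - σX n * kX'| * |σY n * kY| + |σX n * kX'| * |σY n * kY - σY n * kY'| :=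
          abs_mul_sub_mul_le _ _ _ _
      _ ≤ εX n * 1 + (σX' n / σX n)⁻¹ * εY n :=
          add_le_add (mul_le_mul hdX hkY (abs_nonneg _) ((abs_nonneg _).trans hdX))
            (mul_le_mul hkX' hdY (abs_nonneg _) ((abs_nonneg _).trans hkX'))
      _ = _ := by ring
  rw [gauss2_eq_mul_gaussKernel, gauss2_eq_mul_gaussKernel, ← mul_sub, abs_mul,
    abs_of_pos (by positivity), mul_one_div, le_div_iff₀ hσXY]
  calc (2 * π)⁻¹ * |kX * kY - kX' * kY'| * (σX n * σY n)
      ≤ 1 * |kX * kY - kX' * kY'| * (σX n * σY n) := by gcongr; exact inv_two_pi_le_one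
    _ ≤ _ := by linarith

lemma isLittleO_iSup_abs_sub_of_abs_sub_le {α ι : Type*} [Nonempty ι] {l : Filter α}
    {f g g' : α → ι → ℝ} {r ε : α → ℝ}
    (hbdd : ∀ᶠ a in l, BddAbove (Set.range fun i => |f a i - g a i|))
    (h : (fun a => ⨆ i, |f a i - g a i|) =o[l] r) (hε : Tendsto ε l (𝓝 0))
    (hgg' : ∀ᶠ a in l, ∀ i, |g a i - g' a i| ≤ ε a * r a) :
    (fun a => ⨆ i, |f a i - g' a i|) =o[l] r := by
  have hεr : (fun a => ε a * r a) =o[l] r := by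
    simpa using ((isLittleO_one_iff ℝ).2 hε).mul_isBigO (isBigO_refl r l)
  refine IsBigO.trans_isLittleO (IsBigO.of_bound' ?_) (h.add hεr)
  filter_upwards [hbdd, hgg'] with a hba hga
  rw [Real.norm_of_nonneg (Real.iSup_nonneg fun _ => abs_nonneg _)]
  refine (ciSup_le fun i => ?_).trans (le_abs_self _)
  exact (abs_sub_le _ _ _).trans (add_le_add (le_ciSup hba i) (hga i))

lemma gauss2_nonneg (μX μY : ℝ) {σX σY : ℝ} (hσX : 0 ≤ σX) (hσY : 0 ≤ σY) (x y : ℤ) :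
    0 ≤ gauss2 μX μY σX σY x y := by
  rw [gauss2_eq_mul_gaussKernel]
  exact mul_nonneg (by positivity)
    (mul_nonneg (gaussKernel_nonneg _ _ hσX) (gaussKernel_nonneg _ _ hσY))

lemma gauss2_le_one_div_mul (μX μY : ℝ) {σX σY : ℝ} (hσX : 0 < σX) (hσY : 0 < σY) (x y : ℤ) :
    gauss2 μX μY σX σY x y ≤ 1 / (σX * σY) := by
  set kX := gaussKernel μX σX x
  set kY := gaussKernel μY σY y
  have hk0 : 0 ≤ kX * kY :=
    mul_nonneg (gaussKernel_nonneg _ _ hσX.le) (gaussKernel_nonneg _ _ hσY.le)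
  rw [gauss2_eq_mul_gaussKernel, le_div_iff₀ (mul_pos hσX hσY)]
  calc (2 * π)⁻¹ * (kX * kY) * (σX * σY) ≤ 1 * (kX * kY) * (σX * σY) :=
        mul_le_mul_of_nonneg_right (mul_le_mul_of_nonneg_right inv_two_pi_le_one hk0)
          (mul_pos hσX hσY).le
    _ = σX * kX * (σY * kY) := by ring
    _ ≤ 1 := mul_le_one₀ (mul_gaussKernel_le_one _ _ hσX.ne')
          (mul_nonneg hσY.le (gaussKernel_nonneg _ _ hσY.le)) (mul_gaussKernel_le_one _ _ hσY.ne')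

lemma bddAbove_range_abs_measureReal_sub_gauss2 {Ω : Type*} [MeasurableSpace Ω] (P : Measure Ω)
    [IsZeroOrProbabilityMeasure P] (s : ℤ × ℤ → Set Ω) (μX μY : ℝ) {σX σY : ℝ}
    (hσX : 0 < σX) (hσY : 0 < σY) :
    BddAbove (Set.range fun xy : ℤ × ℤ => |P.real (s xy) - gauss2 μX μY σX σY xy.1 xy.2|) := by
  refine ⟨max 1 (1 / (σX * σY)), ?_⟩
  rintro _ ⟨xy, rfl⟩
  exact abs_sub_le_of_nonneg_of_le measureReal_nonneg (measureReal_le_one.trans (le_max_left _ _))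
    (gauss2_nonneg _ _ hσX.le hσY.le _ _)
    ((gauss2_le_one_div_mul _ _ hσX hσY _ _).trans (le_max_right _ _))

/-- a local limit theorem is preserved under changing the means by
`o(σ)` and the standard deviations by a factor `~ 1`. -/
theorem stmt14 {Ω : ℕ → Type*} [∀ n, MeasurableSpace (Ω n)]
    (μ : ∀ n, Measure (Ω n)) [∀ n, IsProbabilityMeasure (μ n)]
    (X Y : ∀ n, Ω n → ℤ)
    (μX μY σX σY μX' μY' σX' σY' : ℕ → ℝ)
    (hσX : ∀ n, 0 < σX n) (hσY : ∀ n, 0 < σY n)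
    (hLLT : SatisfiesLLT μ X Y μX μY σX σY)
    (hμX : (fun n => μX' n - μX n) =o[atTop] σX)
    (hμY : (fun n => μY' n - μY n) =o[atTop] σY)
    (hσX' : Tendsto (fun n => σX' n / σX n) atTop (nhds 1))
    (hσY' : Tendsto (fun n => σY' n / σY n) atTop (nhds 1)) :
    SatisfiesLLT μ X Y μX' μY' σX' σY' := by
  obtain ⟨ε, hε, hgauss⟩ := exists_tendsto_zero_abs_gauss2_sub_le hσX hσY hμX hμY hσX' hσY'
  have hnorm : (fun n => 1 / (σX n * σY n)) =O[atTop] fun n => 1 / (σX' n * σY' n) := by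
    simpa only [one_div, Pi.inv_def, Pi.mul_apply] using
      ((isEquivalent_of_tendsto_one hσX').mul (isEquivalent_of_tendsto_one hσY')).inv.isBigO_symm
  refine (isLittleO_iSup_abs_sub_of_abs_sub_le ?_ hLLT hε ?_).trans_isBigO hnorm
  · exact Eventually.of_forall fun n =>
      bddAbove_range_abs_measureReal_sub_gauss2 (μ n) _ _ _ (hσX n) (hσY n)
  · exact hgauss.mono fun n h xy => h xy.1 xy.2
end

section
/- Fix an integer r ≥ 2. For d̄ > r/(r−1), let ξ(d̄) be the unique ξ ∈ (0,1) with Φ_r(ξ) = d̄. Then, as d̄ → ∞: if r ≥ 3, ξ(d̄) = e^{−d̄} + d̄·e^{−2d̄} + O(d̄²·e^{−3d̄}) and F_r(d̄) = e^{−d̄} + ((d̄+1)/2)·e^{−2d̄} + O(d̄²·e^{−3d̄}); if r = 2, ξ(d̄) = e^{−d̄} + 2d̄·e^{−2d̄} + O(d̄²·e^{−3d̄}) and F_2(d̄) = e^{−d̄} + (d̄ + 1/2)·e^{−2d̄} + O(d̄²·e^{−3d̄}). -/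
/-!
With `g = phiRatio r`, the equation `Φ_r(ξ) = x` reads `log ξ = -x g(ξ)`, i.e.
`ξ = e^{-x} e^w` with `w = x (1 - g(ξ))`. Since `Φ_r(ξ) ≤ 2/ξ` we get `ξ ≤ 2/x → 0`, and
`g(ξ) = 1 - cξ + O(ξ²)` with `c = 1` for `r ≥ 3` and `c = 2` for `r = 2`. Thus `w = O(xξ)` is
bounded, so `ξ = O(e^{-x})`; then `w = cxξ + O(xξ²) → 0`, and expanding `e^w` to second order
gives `ξ = e^{-x} + c x e^{-2x} + O(x² e^{-3x})`. On the branch,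
`F_r(x) = x Ψ_r(ξ) - log(1 - ξ)` with `Ψ_r = Psi r` satisfying `Ψ_r(ξ) = -cξ²/2 + O(ξ³)`,
and substituting the expansion of `ξ` gives that of `F_r`.
-/

open Filter Real Asymptotics

/-- `Φ_r(ξ) = log(1/ξ)·(1−ξ^r)/((1−ξ^{r−1})(1−ξ))`. -/
noncomputable def Phi (r : ℕ) (ξ : ℝ) : ℝ :=
  Real.log (1 / ξ) * (1 - ξ ^ r) / ((1 - ξ ^ (r - 1)) * (1 - ξ))

/-- `F_r(d̄)` computed from a branch `xi` of `Φ_r⁻¹`. -/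
noncomputable def Fr (r : ℕ) (xi : ℝ → ℝ) (x : ℝ) : ℝ :=
  x * Real.log (1 - xi x) - (x / r) * Real.log (1 - xi x ^ r)
    - (xi x / (1 - xi x)) * Real.log (xi x) - Real.log (1 - xi x)

open Topology Set

noncomputable def phiRatio (r : ℕ) (t : ℝ) : ℝ :=
  (1 - t ^ (r - 1)) * (1 - t) / (1 - t ^ r)

noncomputable def Psi (r : ℕ) (t : ℝ) : ℝ :=
  log (1 - t) + t * phiRatio r t / (1 - t) - log (1 - t ^ r) / r

lemma Phi_mul_phiRatio {r : ℕ} (hr : 2 ≤ r) {t : ℝ} (ht0 : 0 < t) (ht1 : t < 1) :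
    Phi r t * phiRatio r t = -log t := by
  have h1 : 1 - t ^ (r - 1) ≠ 0 := (sub_pos.2 (pow_lt_one₀ ht0.le ht1 (by omega))).ne'
  have h2 : 1 - t ^ r ≠ 0 := (sub_pos.2 (pow_lt_one₀ ht0.le ht1 (by omega))).ne'
  have h3 : 1 - t ≠ 0 := (sub_pos.2 ht1).ne'
  rw [Phi, phiRatio, one_div, log_inv]
  field_simp

lemma Phi_le_two_div {r : ℕ} (hr : 2 ≤ r) {t : ℝ} (ht0 : 0 < t) (ht1 : t < 1) :
    Phi r t ≤ 2 / t := by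
  obtain ⟨m, rfl⟩ : ∃ m, r = m + 1 := ⟨r - 1, by omega⟩
  have hs : t ^ m ≤ t := pow_le_of_le_one ht0.le ht1.le (by omega)
  have hs1 : 0 < 1 - t ^ m := sub_pos.2 (pow_lt_one₀ ht0.le ht1 (by omega))
  have hlog : t * log (1 / t) ≤ 1 - t := by
    have := log_le_sub_one_of_pos (one_div_pos.2 ht0)
    calc t * log (1 / t) ≤ t * (1 / t - 1) := by gcongr
      _ = 1 - t := by field_simp
  -- holds since `t^m ≤ t`
  have hnum : 1 - t ^ (m + 1) ≤ 2 * (1 - t ^ m) := by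
    rw [pow_succ]; nlinarith [sq_nonneg (1 - t ^ m)]
  rw [Phi, Nat.add_sub_cancel, div_le_div_iff₀ (by nlinarith) ht0]
  have hnum0 : 0 ≤ 1 - t ^ (m + 1) := by nlinarith [pow_succ t m, pow_pos ht0 m]
  calc log (1 / t) * (1 - t ^ (m + 1)) * t = t * log (1 / t) * (1 - t ^ (m + 1)) := by ring
    _ ≤ (1 - t) * (2 * (1 - t ^ m)) := by gcongr
    _ = 2 * ((1 - t ^ m) * (1 - t)) := by ring

lemma Fr_eq_of_log_eq {r : ℕ} {xi : ℝ → ℝ} {x : ℝ}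
    (h : log (xi x) = -(x * phiRatio r (xi x))) :
    Fr r xi x = x * Psi r (xi x) - log (1 - xi x) := by
  rw [Fr, Psi, h]; ring

lemma isBigO_nhdsGT_zero_of_bound {f : ℝ → ℝ} (C : ℝ) (n : ℕ)
    (h : ∀ t, 0 < t → t ≤ 1 / 2 → |f t| ≤ C * t ^ n) : f =O[𝓝[>] 0] (· ^ n) := by
  refine IsBigO.of_bound C ?_
  filter_upwards [Ioo_mem_nhdsGT (show (0 : ℝ) < 1 / 2 by norm_num)] with t ⟨h0, h1⟩
  rw [norm_eq_abs, norm_pow, norm_eq_abs, abs_of_pos h0]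
  exact h t h0 h1.le

lemma abs_sum_add_log_one_sub_le (n : ℕ) {s : ℝ} (h0 : 0 ≤ s) (h1 : s ≤ 1 / 2) :
    |∑ i ∈ Finset.range n, s ^ (i + 1) / (i + 1) + log (1 - s)| ≤ 2 * s ^ (n + 1) := by
  have h := abs_log_sub_add_sum_range_le (show |s| < 1 by rw [abs_of_nonneg h0]; linarith) n
  rw [abs_of_nonneg h0] at h
  refine h.trans ?_
  rw [div_le_iff₀ (by linarith)]
  nlinarith [pow_nonneg h0 (n + 1)]

lemma abs_log_one_sub_add_le {s : ℝ} (h0 : 0 ≤ s) (h1 : s ≤ 1 / 2) :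
    |log (1 - s) + s + s ^ 2 / 2| ≤ 2 * s ^ 3 := by
  have h := abs_sum_add_log_one_sub_le 2 h0 h1
  norm_num [Finset.sum_range_succ] at h
  convert h using 2; ring

lemma isBigO_phiRatio_sub_of_three_le {r : ℕ} (hr : 3 ≤ r) :
    (fun t => phiRatio r t - (1 - t)) =O[𝓝[>] 0] (· ^ 2) := by
  refine isBigO_nhdsGT_zero_of_bound 2 2 fun t ht0 ht => ?_
  obtain ⟨m, rfl⟩ : ∃ m, r = m + 1 := ⟨r - 1, by omega⟩
  have hs : t ^ m ≤ t ^ 2 := pow_le_pow_of_le_one ht0.le (by linarith) (by omega)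
  have hst : 1 / 2 ≤ 1 - t ^ m * t := by nlinarith [pow_pos ht0 m]
  have h : phiRatio (m + 1) t - (1 - t) = -(t ^ m * (1 - t) ^ 2 / (1 - t ^ m * t)) := by
    rw [phiRatio, Nat.add_sub_cancel, pow_succ]
    field_simp
    ring
  have hm := pow_pos ht0 m
  rw [h, abs_neg, abs_of_nonneg (by positivity), div_le_iff₀ (by linarith)]
  nlinarith [mul_le_mul_of_nonneg_left (show (1 - t) ^ 2 ≤ 1 by nlinarith) hm.le]

lemma isBigO_phiRatio_two_sub : (fun t => phiRatio 2 t - (1 - 2 * t)) =O[𝓝[>] 0] (· ^ 2) := by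
  refine isBigO_nhdsGT_zero_of_bound 2 2 fun t ht0 ht => ?_
  have h : phiRatio 2 t - (1 - 2 * t) = 2 * t ^ 2 / (1 + t) := by
    have : (1 : ℝ) - t ≠ 0 := by linarith
    have : (1 : ℝ) + t ≠ 0 := by linarith
    rw [phiRatio, show (1 : ℝ) - t ^ 2 = (1 - t) * (1 + t) by ring]
    field_simp
    ring
  rw [h, abs_of_nonneg (by positivity), div_le_iff₀ (by linarith)]
  nlinarith [sq_nonneg t]

lemma isBigO_Psi_add_of_three_le {r : ℕ} (hr : 3 ≤ r) :
    (fun t => Psi r t + t ^ 2 / 2) =O[𝓝[>] 0] (· ^ 3) := by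
  refine isBigO_nhdsGT_zero_of_bound 4 3 fun t ht0 ht => ?_
  obtain ⟨m, rfl⟩ : ∃ m, r = m + 1 := ⟨r - 1, by omega⟩
  have hs : t ^ m ≤ t ^ 2 := pow_le_pow_of_le_one ht0.le (by linarith) (by omega)
  have hr3 : t ^ (m + 1) ≤ t ^ 3 := pow_le_pow_of_le_one ht0.le (by linarith) (by omega)
  have hst : t ^ m * t ≤ t := by nlinarith [pow_pos ht0 m]
  have hlog := abs_log_one_sub_add_le ht0.le ht
  have hlogr : |log (1 - t ^ (m + 1))| ≤ 2 * t ^ (m + 1) := by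
    simpa using abs_sum_add_log_one_sub_le 0 (pow_pos ht0 _).le (by linarith [pow_succ t m])
  have hden : 0 < 1 - t ^ m * t := by linarith
  have hmid : t * phiRatio (m + 1) t / (1 - t) - t = -(t ^ m * t * (1 - t) / (1 - t ^ m * t)) := by
    have : (1 : ℝ) - t ≠ 0 := by linarith
    have : 1 - t * t ^ m ≠ 0 := by rw [mul_comm]; exact hden.ne'
    rw [phiRatio, Nat.add_sub_cancel, pow_succ]
    field_simp
    ring
  have hmid' : |t * phiRatio (m + 1) t / (1 - t) - t| ≤ t ^ 3 := by
    have h1t : 0 ≤ 1 - t := by linarith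
    rw [hmid, abs_neg, abs_of_nonneg (div_nonneg (by positivity) hden.le), div_le_iff₀ hden]
    nlinarith [mul_le_mul_of_nonneg_right hs (mul_nonneg ht0.le h1t),
      mul_le_mul_of_nonneg_left hst (pow_pos ht0 3).le]
  have hr' : |log (1 - t ^ (m + 1)) / (m + 1 : ℕ)| ≤ t ^ 3 := by
    rw [abs_div, Nat.abs_cast, div_le_iff₀ (by positivity)]
    have : (2 : ℝ) ≤ (m + 1 : ℕ) := by exact_mod_cast (show 2 ≤ m + 1 by omega)
    nlinarith [pow_pos ht0 3]
  calc |Psi (m + 1) t + t ^ 2 / 2|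
      = |(log (1 - t) + t + t ^ 2 / 2) + (t * phiRatio (m + 1) t / (1 - t) - t)
          - log (1 - t ^ (m + 1)) / (m + 1 : ℕ)| := by rw [Psi]; ring_nf
    _ ≤ 2 * t ^ 3 + t ^ 3 + t ^ 3 := by
        exact (abs_sub _ _).trans
          (add_le_add ((abs_add_le _ _).trans (add_le_add hlog hmid')) hr')
    _ = 4 * t ^ 3 := by ring

lemma isBigO_Psi_two_add : (fun t => Psi 2 t + t ^ 2) =O[𝓝[>] 0] (· ^ 3) := by
  refine isBigO_nhdsGT_zero_of_bound 4 3 fun t ht0 ht => ?_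
  have hlog := abs_log_one_sub_add_le ht0.le ht
  have hlog2 : |log (1 - t ^ 2) + t ^ 2| ≤ 2 * (t ^ 2) ^ 2 := by
    simpa [add_comm] using abs_sum_add_log_one_sub_le 1 (sq_nonneg t) (by nlinarith)
  have hmid : t * phiRatio 2 t / (1 - t) - t + t ^ 2 = t ^ 3 / (1 + t) := by
    have : (1 : ℝ) - t ≠ 0 := by linarith
    have : (1 : ℝ) + t ≠ 0 := by linarith
    rw [phiRatio, show (1 : ℝ) - t ^ 2 = (1 - t) * (1 + t) by ring]
    field_simp
    ring
  have hmid' : |t * phiRatio 2 t / (1 - t) - t + t ^ 2| ≤ t ^ 3 := by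
    rw [hmid, abs_of_nonneg (by positivity), div_le_iff₀ (by linarith)]
    nlinarith [pow_pos ht0 3, pow_pos ht0 4]
  have h4 : (t ^ 2) ^ 2 ≤ t ^ 3 := by nlinarith [pow_pos ht0 3]
  calc |Psi 2 t + t ^ 2|
      = |(log (1 - t) + t + t ^ 2 / 2) + (t * phiRatio 2 t / (1 - t) - t + t ^ 2)
          - (log (1 - t ^ 2) + t ^ 2) / 2| := by rw [Psi]; push_cast; ring_nf
    _ ≤ 2 * t ^ 3 + t ^ 3 + (2 * (t ^ 2) ^ 2) / 2 := by
        refine (abs_sub _ _).trans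
          (add_le_add ((abs_add_le _ _).trans (add_le_add hlog hmid')) ?_)
        rw [abs_div, abs_two]; linarith
    _ ≤ 4 * t ^ 3 := by linarith

lemma isBigO_pow_pow_atTop {p q : ℕ} (hpq : p ≤ q) :
    (fun x : ℝ => x ^ p) =O[atTop] (fun x => x ^ q) :=
  (isBigO_pow_pow_cobounded_of_le hpq).mono IsOrderBornology.atTop_le_cobounded

section Branch

variable {r : ℕ} {c : ℝ} {xi : ℝ → ℝ}

lemma eventually_xi (hr : 2 ≤ r)
    (hxi : ∀ᶠ x in atTop, xi x ∈ Ioo 0 1 ∧ Phi r (xi x) = x) :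
    ∀ᶠ x in atTop, 0 < xi x ∧ x * xi x ≤ 2 ∧ log (xi x) = -(x * phiRatio r (xi x)) := by
  filter_upwards [hxi] with x ⟨⟨h0, h1⟩, hx⟩
  refine ⟨h0, ?_, ?_⟩
  · have h := Phi_le_two_div hr h0 h1
    rwa [hx, le_div_iff₀ h0] at h
  · have h := Phi_mul_phiRatio hr h0 h1
    rw [hx] at h
    linarith

lemma tendsto_xi (hr : 2 ≤ r)
    (hxi : ∀ᶠ x in atTop, xi x ∈ Ioo 0 1 ∧ Phi r (xi x) = x) :
    Tendsto xi atTop (𝓝[>] 0) := by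
  have h := eventually_xi hr hxi
  refine tendsto_nhdsWithin_iff.2 ⟨?_, h.mono fun x hx => hx.1⟩
  refine tendsto_of_tendsto_of_tendsto_of_le_of_le' tendsto_const_nhds
    ((tendsto_const_nhds (x := (2 : ℝ))).div_atTop tendsto_id) (h.mono fun x hx => hx.1.le) ?_
  filter_upwards [h, eventually_gt_atTop 0] with x ⟨_, hx, _⟩ hx0
  rw [id, le_div_iff₀ hx0]
  linarith

lemma isBigO_log_xi_add_sub (hr : 2 ≤ r)
    (hxi : ∀ᶠ x in atTop, xi x ∈ Ioo 0 1 ∧ Phi r (xi x) = x)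
    (hg : (fun t => phiRatio r t - (1 - c * t)) =O[𝓝[>] 0] (· ^ 2)) :
    (fun x => log (xi x) + x - c * (x * xi x)) =O[atTop] (fun x => x * xi x ^ 2) := by
  refine ((isBigO_refl (fun x : ℝ => x) atTop).mul
    (hg.comp_tendsto (tendsto_xi hr hxi))).neg_left.congr' ?_ .rfl
  filter_upwards [eventually_xi hr hxi] with x ⟨_, _, hlog⟩
  simp only [Function.comp, hlog]
  ring

lemma isBigO_log_xi_add_mul_xi (hr : 2 ≤ r)
    (hxi : ∀ᶠ x in atTop, xi x ∈ Ioo 0 1 ∧ Phi r (xi x) = x)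
    (hg : (fun t => phiRatio r t - (1 - c * t)) =O[𝓝[>] 0] (· ^ 2)) :
    (fun x => log (xi x) + x) =O[atTop] (fun x => x * xi x) := by
  have hxi1 : xi =O[atTop] (fun _ => (1 : ℝ)) :=
    ((tendsto_xi hr hxi).mono_right nhdsWithin_le_nhds).isBigO_one ℝ
  have hsq : (fun x => x * xi x ^ 2) =O[atTop] (fun x => x * xi x) :=
    ((isBigO_refl (fun x => x * xi x) atTop).mul hxi1).congr (fun x => by ring) (fun x => by ring)
  exact (((isBigO_log_xi_add_sub hr hxi hg).trans hsq).add (isBigO_const_mul_self c _ atTop)).congr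
    (fun x => by ring) (fun x => by ring)

lemma isBigO_xi_exp_neg (hr : 2 ≤ r)
    (hxi : ∀ᶠ x in atTop, xi x ∈ Ioo 0 1 ∧ Phi r (xi x) = x)
    (hg : (fun t => phiRatio r t - (1 - c * t)) =O[𝓝[>] 0] (· ^ 2)) :
    xi =O[atTop] (fun x => exp (-x)) := by
  have hbdd : (fun x => x * xi x) =O[atTop] (fun _ => (1 : ℝ)) := by
    refine IsBigO.of_bound 2 ?_
    filter_upwards [eventually_xi hr hxi, eventually_gt_atTop 0] with x ⟨h0, h2, _⟩ hx
    rw [norm_one, mul_one, norm_of_nonneg (by positivity)]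
    exact h2
  obtain ⟨C, hC⟩ := ((isBigO_log_xi_add_mul_xi hr hxi hg).trans hbdd).bound
  refine IsBigO.of_bound (exp C) ?_
  filter_upwards [hC, eventually_xi hr hxi] with x hx ⟨h0, _⟩
  rw [norm_one, mul_one, norm_eq_abs] at hx
  calc ‖xi x‖ = exp (log (xi x) + x) * exp (-x) := by
        rw [← exp_add, add_neg_cancel_right, exp_log h0, norm_of_nonneg h0.le]
    _ ≤ exp C * exp (-x) := by gcongr; linarith [le_abs_self (log (xi x) + x)]
    _ = exp C * ‖exp (-x)‖ := by rw [norm_of_nonneg (exp_pos _).le]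

lemma isBigO_log_xi_add_mul_exp_neg (hr : 2 ≤ r)
    (hxi : ∀ᶠ x in atTop, xi x ∈ Ioo 0 1 ∧ Phi r (xi x) = x)
    (hg : (fun t => phiRatio r t - (1 - c * t)) =O[𝓝[>] 0] (· ^ 2)) :
    (fun x => log (xi x) + x) =O[atTop] (fun x => x * exp (-x)) :=
  (isBigO_log_xi_add_mul_xi hr hxi hg).trans
    ((isBigO_refl (fun x : ℝ => x) atTop).mul (isBigO_xi_exp_neg hr hxi hg))

lemma eventually_abs_log_xi_add_lt_one (hr : 2 ≤ r)
    (hxi : ∀ᶠ x in atTop, xi x ∈ Ioo 0 1 ∧ Phi r (xi x) = x)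
    (hg : (fun t => phiRatio r t - (1 - c * t)) =O[𝓝[>] 0] (· ^ 2)) :
    ∀ᶠ x in atTop, |log (xi x) + x| < 1 := by
  have h := (isBigO_log_xi_add_mul_exp_neg hr hxi hg).trans_tendsto
    (by simpa using tendsto_pow_mul_exp_neg_atTop_nhds_zero 1)
  simpa [dist_zero_right] using Metric.tendsto_nhds.1 h 1 one_pos

lemma exp_neg_mul_exp_log_add {x y : ℝ} (hy : 0 < y) : exp (-x) * exp (log y + x) = y := by
  rw [← exp_add, show -x + (log y + x) = log y by ring, exp_log hy]

lemma isBigO_xi_sub_exp_neg (hr : 2 ≤ r)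
    (hxi : ∀ᶠ x in atTop, xi x ∈ Ioo 0 1 ∧ Phi r (xi x) = x)
    (hg : (fun t => phiRatio r t - (1 - c * t)) =O[𝓝[>] 0] (· ^ 2)) :
    (fun x => xi x - exp (-x)) =O[atTop] (fun x => x * exp (-x) ^ 2) := by
  have h : (fun x => xi x - exp (-x)) =O[atTop] (fun x => exp (-x) * (log (xi x) + x)) := by
    refine IsBigO.of_bound 2 ?_
    filter_upwards [eventually_abs_log_xi_add_lt_one hr hxi hg, eventually_xi hr hxi]
      with x hw ⟨h0, _⟩
    have hid : xi x - exp (-x) = exp (-x) * (exp (log (xi x) + x) - 1) := by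
      rw [mul_sub_one, exp_neg_mul_exp_log_add h0]
    rw [norm_eq_abs, norm_eq_abs, hid, abs_mul, abs_mul, abs_of_pos (exp_pos _)]
    nlinarith [abs_exp_sub_one_le hw.le, exp_pos (-x)]
  exact h.trans (((isBigO_refl _ atTop).mul (isBigO_log_xi_add_mul_exp_neg hr hxi hg)).congr_right
    fun x => by ring)

theorem isBigO_xi_sub (hr : 2 ≤ r)
    (hxi : ∀ᶠ x in atTop, xi x ∈ Ioo 0 1 ∧ Phi r (xi x) = x)
    (hg : (fun t => phiRatio r t - (1 - c * t)) =O[𝓝[>] 0] (· ^ 2)) :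
    (fun x => xi x - (exp (-x) + c * x * exp (-x) ^ 2))
      =O[atTop] (fun x => x ^ 2 * exp (-x) ^ 3) := by
  have hξ := isBigO_xi_exp_neg hr hxi hg
  have hw := isBigO_log_xi_add_mul_exp_neg hr hxi hg
  have hx : (fun x : ℝ => x * exp (-x) ^ 3) =O[atTop] (fun x => x ^ 2 * exp (-x) ^ 3) :=
    ((isBigO_pow_pow_atTop one_le_two).mul (isBigO_refl _ atTop)).congr_left fun x => by ring
  have h1 : (fun x => xi x - exp (-x) * (1 + (log (xi x) + x)))
      =O[atTop] (fun x => x ^ 2 * exp (-x) ^ 3) := by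
    have h : (fun x => xi x - exp (-x) * (1 + (log (xi x) + x)))
        =O[atTop] (fun x => exp (-x) * (log (xi x) + x) ^ 2) := by
      refine IsBigO.of_bound 1 ?_
      filter_upwards [eventually_abs_log_xi_add_lt_one hr hxi hg, eventually_xi hr hxi]
        with x hw ⟨h0, _⟩
      have hid : xi x - exp (-x) * (1 + (log (xi x) + x))
          = exp (-x) * (exp (log (xi x) + x) - 1 - (log (xi x) + x)) := by
        rw [mul_sub, mul_sub_one, exp_neg_mul_exp_log_add h0]; ring
      rw [norm_eq_abs, norm_eq_abs, hid, abs_mul, abs_mul, abs_of_pos (exp_pos _), abs_sq]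
      nlinarith [abs_exp_sub_one_sub_id_le hw.le, exp_pos (-x)]
    exact h.trans (((isBigO_refl _ atTop).mul (hw.pow 2)).congr_right fun x => by ring)
  have h2 : (fun x => exp (-x) * (log (xi x) + x - c * (x * xi x)))
      =O[atTop] (fun x => x ^ 2 * exp (-x) ^ 3) :=
    (((isBigO_refl _ atTop).mul ((isBigO_log_xi_add_sub hr hxi hg).trans
      ((isBigO_refl _ atTop).mul (hξ.pow 2)))).congr_right fun x => by ring).trans hx
  have h3 : (fun x => c * x * exp (-x) * (xi x - exp (-x)))
      =O[atTop] (fun x => x ^ 2 * exp (-x) ^ 3) :=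
    (((isBigO_const_mul_self c (fun x => x * exp (-x)) atTop).congr_left fun x => by ring).mul
      (isBigO_xi_sub_exp_neg hr hxi hg)).congr_right fun x => by ring
  exact ((h1.add h2).add h3).congr_left fun x => by ring

theorem isBigO_Fr_sub (hr : 2 ≤ r)
    (hxi : ∀ᶠ x in atTop, xi x ∈ Ioo 0 1 ∧ Phi r (xi x) = x)
    (hg : (fun t => phiRatio r t - (1 - c * t)) =O[𝓝[>] 0] (· ^ 2))
    (hΨ : (fun t => Psi r t + c / 2 * t ^ 2) =O[𝓝[>] 0] (· ^ 3)) :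
    (fun x => Fr r xi x - (exp (-x) + (c / 2 * x + 1 / 2) * exp (-x) ^ 2))
      =O[atTop] (fun x => x ^ 2 * exp (-x) ^ 3) := by
  have ht := tendsto_xi hr hxi
  have hcube := (isBigO_xi_exp_neg hr hxi hg).pow 3
  have h1 : (fun x => x * (Psi r (xi x) + c / 2 * xi x ^ 2))
      =O[atTop] (fun x => x ^ 2 * exp (-x) ^ 3) :=
    ((isBigO_pow_pow_atTop one_le_two).mul ((hΨ.comp_tendsto ht).trans hcube)).congr_left
      fun x => by simp
  have h2 : (fun x => log (1 - xi x) + xi x + xi x ^ 2 / 2)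
      =O[atTop] (fun x => x ^ 2 * exp (-x) ^ 3) := by
    have hlog : (fun t => log (1 - t) + t + t ^ 2 / 2) =O[𝓝[>] 0] (· ^ 3) :=
      isBigO_nhdsGT_zero_of_bound 2 3 fun t ht0 ht => abs_log_one_sub_add_le ht0.le ht
    exact ((isBigO_pow_pow_atTop zero_le_two).mul ((hlog.comp_tendsto ht).trans hcube)).congr_left
      fun x => by simp
  have h4 : (fun x => (1 / 2 - c / 2 * x) * ((xi x + exp (-x)) * (xi x - exp (-x))))
      =O[atTop] (fun x => x ^ 2 * exp (-x) ^ 3) := by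
    have hlin : (fun x : ℝ => 1 / 2 - c / 2 * x) =O[atTop] (fun x => x ^ 1) :=
      (((isBigO_pow_pow_atTop zero_le_one).const_mul_left (1 / 2)).sub
        (isBigO_const_mul_self (c / 2) _ atTop)).congr_left fun x => by ring
    exact (hlin.mul (((isBigO_xi_exp_neg hr hxi hg).add (isBigO_refl _ atTop)).mul
      (isBigO_xi_sub_exp_neg hr hxi hg))).congr_right fun x => by ring
  refine (((h1.sub h2).add (isBigO_xi_sub hr hxi hg)).add h4).congr' ?_ .rfl
  filter_upwards [eventually_xi hr hxi] with x ⟨_, _, hlog⟩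
  rw [Fr_eq_of_log_eq hlog]
  ring

end Branch

/-- the asymptotics of `ξ(d̄) = Φ_r⁻¹(d̄)` and `F_r(d̄)` as `d̄ → ∞`:
for `r ≥ 3`, `ξ = e^{−d̄} + d̄e^{−2d̄} + O(d̄²e^{−3d̄})` and
`F_r = e^{−d̄} + ((d̄+1)/2)e^{−2d̄} + O(d̄²e^{−3d̄})`; for `r = 2`,
`ξ = e^{−d̄} + 2d̄e^{−2d̄} + O(d̄²e^{−3d̄})` and
`F_2 = e^{−d̄} + (d̄+1/2)e^{−2d̄} + O(d̄²e^{−3d̄})`. -/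
theorem stmt16 (r : ℕ) (hr : 2 ≤ r) (xi : ℝ → ℝ)
    (hxi : ∀ x : ℝ, (r : ℝ) / (r - 1) < x → xi x ∈ Set.Ioo (0 : ℝ) 1 ∧ Phi r (xi x) = x) :
    (3 ≤ r →
      ((fun x : ℝ => xi x - (Real.exp (-x) + x * Real.exp (-2 * x)))
          =O[atTop] (fun x : ℝ => x ^ 2 * Real.exp (-3 * x))
        ∧ (fun x : ℝ => Fr r xi x - (Real.exp (-x) + ((x + 1) / 2) * Real.exp (-2 * x)))
          =O[atTop] (fun x : ℝ => x ^ 2 * Real.exp (-3 * x))))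
    ∧ (r = 2 →
      ((fun x : ℝ => xi x - (Real.exp (-x) + 2 * x * Real.exp (-2 * x)))
          =O[atTop] (fun x : ℝ => x ^ 2 * Real.exp (-3 * x))
        ∧ (fun x : ℝ => Fr r xi x - (Real.exp (-x) + (x + 1 / 2) * Real.exp (-2 * x)))
          =O[atTop] (fun x : ℝ => x ^ 2 * Real.exp (-3 * x)))) := by
  have hxi' : ∀ᶠ x in atTop, xi x ∈ Ioo 0 1 ∧ Phi r (xi x) = x :=
    (eventually_gt_atTop _).mono hxi
  have hexp2 (x : ℝ) : exp (-2 * x) = exp (-x) ^ 2 := by rw [← exp_nat_mul]; ring_nf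
  have hexp3 (x : ℝ) : exp (-3 * x) = exp (-x) ^ 3 := by rw [← exp_nat_mul]; ring_nf
  simp only [hexp2, hexp3]
  refine ⟨fun h3 => ?_, fun h2 => ?_⟩
  · have hg : (fun t => phiRatio r t - (1 - 1 * t)) =O[𝓝[>] 0] (· ^ 2) :=
      (isBigO_phiRatio_sub_of_three_le h3).congr_left fun t => by ring
    have hΨ : (fun t => Psi r t + 1 / 2 * t ^ 2) =O[𝓝[>] 0] (· ^ 3) :=
      (isBigO_Psi_add_of_three_le h3).congr_left fun t => by ring
    exact ⟨(isBigO_xi_sub hr hxi' hg).congr_left fun x => by ring,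
      (isBigO_Fr_sub hr hxi' hg hΨ).congr_left fun x => by ring⟩
  · subst h2
    have hΨ : (fun t => Psi 2 t + 2 / 2 * t ^ 2) =O[𝓝[>] 0] (· ^ 3) :=
      isBigO_Psi_two_add.congr_left fun t => by ring
    exact ⟨(isBigO_xi_sub hr hxi' isBigO_phiRatio_two_sub).congr_left fun x => by ring,
      (isBigO_Fr_sub hr hxi' isBigO_phiRatio_two_sub hΨ).congr_left fun x => by ring⟩
end

section
/- Fix an integer r ≥ 2, and let m = m(s) satisfy m = o(s^{4/3}) as s → ∞ and m ≤ C(s,r). Let d̄ = r·m/s. If r ≥ 3, then C(C(s,r), m) ~ (s^{r·m}/(m!·(r!)^m))·e^{−(r−1)·d̄/2} as s → ∞. If r = 2, then C(C(s,2), m) ~ (s^{2m}/(m!·2^m))·e^{−d̄/2 − d̄²/4} as s → ∞. -/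
open Filter Real Asymptotics Finset

lemma cast_mul_sub_one_nonneg (n : ℕ) : (0:ℝ) ≤ (n:ℝ) * ((n:ℝ) - 1) := by
  rcases Nat.eq_zero_or_pos n with h | h
  · simp [h]
  · have : (1:ℝ) ≤ n := by exact_mod_cast h
    nlinarith

/-- null sequences from the little-o hypothesis -/

lemma nullpow (m : ℕ → ℕ)
    (he : Tendsto (fun s : ℕ => (m s : ℝ)/(s:ℝ)^((4:ℝ)/3)) atTop (nhds 0))
    (k c : ℕ) (hk : 1 ≤ k) (h : (4:ℝ)/3 * k ≤ c) :
    Tendsto (fun s : ℕ => (m s : ℝ)^k/(s:ℝ)^c) atTop (nhds 0) := by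
  have hg : Tendsto (fun s : ℕ => ((m s : ℝ)/(s:ℝ)^((4:ℝ)/3))^k) atTop (nhds 0) := by
    have := he.pow k
    rwa [zero_pow (by omega : k ≠ 0)] at this
  apply squeeze_zero' (g := fun s : ℕ => ((m s : ℝ)/(s:ℝ)^((4:ℝ)/3))^k)
  · filter_upwards [] with s; positivity
  · filter_upwards [eventually_ge_atTop 1] with s hs
    have hs1 : (1:ℝ) ≤ (s:ℝ) := by exact_mod_cast hs
    have hs0 : (0:ℝ) < (s:ℝ) := by linarith
    rw [div_pow, ← Real.rpow_natCast ((s:ℝ)^((4:ℝ)/3)) k, ← Real.rpow_mul (le_of_lt hs0)]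
    have h1 : (s:ℝ)^(c:ℕ) = (s:ℝ)^((c:ℕ):ℝ) := by rw [Real.rpow_natCast]
    rw [h1]
    apply div_le_div_of_nonneg_left (by positivity) (by positivity)
    exact Real.rpow_le_rpow_of_exponent_le hs1 h
  · exact hg

lemma choose_lb (r s : ℕ) (hs : 2*r ≤ s) : s^r ≤ 2^r * r.factorial * s.choose r := by
  have h1 : (s - (r-1))^r ≤ ∏ j ∈ range r, (s - j) := by
    have := Finset.pow_card_le_prod (range r) (fun j => s - j) (s - (r-1)) ?_
    · simpa using this
    · intro j hj
      have : j ≤ r - 1 := by have := Finset.mem_range.mp hj; omega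
      exact Nat.sub_le_sub_left this s
  have h2 : ∏ j ∈ range r, (s - j) = r.factorial * s.choose r := by
    rw [← Nat.descFactorial_eq_prod_range, Nat.descFactorial_eq_factorial_mul_choose]
  have h3 : s ≤ 2*(s - (r-1)) := by omega
  calc s^r ≤ (2*(s-(r-1)))^r := Nat.pow_le_pow_left h3 r
    _ = 2^r * (s-(r-1))^r := by rw [mul_pow]
    _ ≤ 2^r * ∏ j ∈ range r, (s - j) := Nat.mul_le_mul_left _ h1
    _ = 2^r * r.factorial * s.choose r := by rw [h2, mul_assoc]

lemma descProdM_cast (N M : ℕ) (hMN : M ≤ N) :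
    ((M.factorial : ℝ) * (N.choose M : ℝ)) = ∏ i ∈ range M, ((N:ℝ) - i) := by
  have h2 : ∏ i ∈ range M, (N - i) = M.factorial * N.choose M := by
    rw [← Nat.descFactorial_eq_prod_range, Nat.descFactorial_eq_factorial_mul_choose]
  have := congrArg (fun n : ℕ => (n : ℝ)) h2
  push_cast at this
  rw [← this]
  apply Finset.prod_congr rfl
  intro i hi
  have hi' : i ≤ N := le_trans (le_of_lt (Finset.mem_range.mp hi)) hMN
  push_cast [Nat.cast_sub hi']
  ring

/-- the ratio in the theorem equals exp(L + K). -/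

lemma ratio_eq (r s M : ℕ) (hs : 1 ≤ s) (hM : M ≤ s.choose r) (K : ℝ) :
    (Nat.choose (s.choose r) M : ℝ) /
      (((s:ℝ)^(r*M) / ((M.factorial : ℝ) * (r.factorial : ℝ)^M)) * Real.exp (-K))
    = Real.exp ((∑ i ∈ range M, Real.log (((s.choose r : ℝ) - i) * (r.factorial : ℝ) / (s:ℝ)^r)) + K) := by
  set N : ℕ := s.choose r with hN
  have hs0 : (0:ℝ) < (s:ℝ) := by exact_mod_cast hs
  have hpos : ∀ i ∈ range M, (0:ℝ) < ((N : ℝ) - i) * (r.factorial : ℝ) / (s:ℝ)^r := by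
    intro i hi
    have hi' : i < M := Finset.mem_range.mp hi
    have : (i:ℝ) + 1 ≤ (N:ℝ) := by exact_mod_cast Nat.succ_le_of_lt (lt_of_lt_of_le hi' hM)
    have h1 : (0:ℝ) < (N:ℝ) - i := by linarith
    positivity
  have hexpL : Real.exp (∑ i ∈ range M, Real.log (((N : ℝ) - i) * (r.factorial : ℝ) / (s:ℝ)^r))
      = (M.factorial : ℝ) * (N.choose M : ℝ) * (r.factorial : ℝ)^M / (s:ℝ)^(r*M) := by
    rw [Real.exp_sum]
    have : ∀ i ∈ range M, Real.exp (Real.log (((N : ℝ) - i) * (r.factorial : ℝ) / (s:ℝ)^r))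
        = ((N : ℝ) - i) * ((r.factorial : ℝ) / (s:ℝ)^r) := by
      intro i hi
      rw [Real.exp_log (hpos i hi)]; ring
    rw [Finset.prod_congr rfl this, Finset.prod_mul_distrib, Finset.prod_const,
      Finset.card_range, ← descProdM_cast N M hM, div_pow, ← pow_mul]
    ring
  rw [Real.exp_add, hexpL, Real.exp_neg]
  have hfM : (0:ℝ) < (M.factorial : ℝ) := by exact_mod_cast M.factorial_pos
  have hfr : (0:ℝ) < (r.factorial : ℝ) := by exact_mod_cast r.factorial_pos
  have hsp : (0:ℝ) < (s:ℝ)^(r*M) := by positivity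
  have hexp : (0:ℝ) < Real.exp K := Real.exp_pos K
  field_simp

lemma log_div_le' {a b : ℝ} (ha : 0 < a) (hab : a ≤ b) : Real.log (a/b) ≤ -((b-a)/b) := by
  have hb : 0 < b := lt_of_lt_of_le ha hab
  have := Real.log_le_sub_one_of_pos (x := a/b) (by positivity)
  have h2 : a/b - 1 = -((b-a)/b) := by field_simp; ring
  linarith

lemma le_log_div' {a b : ℝ} (ha : 0 < a) (hab : a ≤ b) : -((b-a)/a) ≤ Real.log (a/b) := by
  have hb : 0 < b := lt_of_lt_of_le ha hab
  have := Real.log_le_sub_one_of_pos (x := b/a) (by positivity)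
  have h1 : Real.log (a/b) = - Real.log (b/a) := by
    rw [← Real.log_inv]; congr 1; field_simp
  have h2 : b/a - 1 = (b-a)/a := by field_simp
  linarith

lemma gauss_cast' (n : ℕ) : ∑ i ∈ range n, (i:ℝ) = n*(n-1)/2 := by
  induction n with
  | zero => simp
  | succ k ih => rw [Finset.sum_range_succ, ih]; push_cast; ring

lemma descProd_cast' (r s : ℕ) (hrs : r ≤ s) :
    (r.factorial : ℝ) * (s.choose r : ℝ) = ∏ j ∈ range r, ((s:ℝ) - j) := by
  have h2 : ∏ j ∈ range r, (s - j) = r.factorial * s.choose r := by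
    rw [← Nat.descFactorial_eq_prod_range, Nat.descFactorial_eq_factorial_mul_choose]
  have := congrArg (fun n : ℕ => (n : ℝ)) h2
  push_cast at this
  rw [← this]
  exact Finset.prod_congr rfl fun j hj => by
    push_cast [Nat.cast_sub (le_trans (le_of_lt (Finset.mem_range.mp hj)) hrs)]; ring

set_option maxHeartbeats 2000000 in
lemma Lbounds (r s M : ℕ) (hr : 2 ≤ r) (hs : 2*r ≤ s)
    (hMN : 2*(M:ℝ) ≤ (s.choose r : ℝ)) :
    (∑ i ∈ range M, Real.log (((s.choose r : ℝ) - i) * (r.factorial : ℝ) / (s:ℝ)^r))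
      ≤ (M:ℝ) * (-((r:ℝ)*((r:ℝ)-1)/2/(s:ℝ))) + (-((M:ℝ)*((M:ℝ)-1)/2/(s.choose r : ℝ)))
    ∧ (M:ℝ) * (-((r:ℝ)*((r:ℝ)-1)/2/(s:ℝ)) - 2*(r:ℝ)^3/(s:ℝ)^2)
        + (-((M:ℝ)*((M:ℝ)-1)/2/(s.choose r : ℝ)) - (M:ℝ)*(2*(M:ℝ)^2/(s.choose r : ℝ)^2))
      ≤ (∑ i ∈ range M, Real.log (((s.choose r : ℝ) - i) * (r.factorial : ℝ) / (s:ℝ)^r)) := by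
  have hrs : r ≤ s := by omega
  have hs1 : 1 ≤ s := by omega
  have hs0 : (0:ℝ) < (s:ℝ) := by exact_mod_cast hs1
  have hsr : (2:ℝ)*(r:ℝ) ≤ (s:ℝ) := by exact_mod_cast hs
  have hr0 : (0:ℝ) < (r:ℝ) := by positivity
  set N : ℝ := (s.choose r : ℝ) with hNdef
  have hN0 : (0:ℝ) < N := by
    rw [hNdef]
    exact_mod_cast Nat.choose_pos hrs
  have hM0 : (0:ℝ) ≤ (M:ℝ) := Nat.cast_nonneg M
  -- term rewriting
  have hprodj : ∏ j ∈ range r, (((s:ℝ) - j)/(s:ℝ)) = (r.factorial : ℝ) * N / (s:ℝ)^r := by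
    rw [Finset.prod_div_distrib, Finset.prod_const, Finset.card_range, ← descProd_cast' r s hrs]
  have hsjpos : ∀ j ∈ range r, (0:ℝ) < (s:ℝ) - j := by
    intro j hj
    have : (j:ℝ) < r := by exact_mod_cast Finset.mem_range.mp hj
    linarith
  have hNipos : ∀ i ∈ range M, (0:ℝ) < N - i := by
    intro i hi
    have : (i:ℝ) < M := by exact_mod_cast Finset.mem_range.mp hi
    linarith
  have hterm : ∀ i ∈ range M,
      Real.log (((s.choose r : ℝ) - i) * (r.factorial : ℝ) / (s:ℝ)^r)
      = (∑ j ∈ range r, Real.log (((s:ℝ) - j)/(s:ℝ))) + Real.log ((N - i)/N) := by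
    intro i hi
    have h1 : ((s.choose r : ℝ) - i) * (r.factorial : ℝ) / (s:ℝ)^r
        = (∏ j ∈ range r, (((s:ℝ) - j)/(s:ℝ))) * ((N - i)/N) := by
      rw [hprodj]
      field_simp
      ring
    rw [h1, Real.log_mul, Real.log_prod]
    · intro j hj; exact ne_of_gt (by have := hsjpos j hj; positivity)
    · apply ne_of_gt
      apply Finset.prod_pos
      intro j hj; have := hsjpos j hj; positivity
    · exact ne_of_gt (by have := hNipos i hi; positivity)
  have hL : (∑ i ∈ range M, Real.log (((s.choose r : ℝ) - i) * (r.factorial : ℝ) / (s:ℝ)^r))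
      = (M:ℝ) * (∑ j ∈ range r, Real.log (((s:ℝ) - j)/(s:ℝ)))
        + ∑ i ∈ range M, Real.log ((N - i)/N) := by
    rw [Finset.sum_congr rfl hterm, Finset.sum_add_distrib, Finset.sum_const, Finset.card_range,
      nsmul_eq_mul]
  -- bounds on Sj
  have hSj_ub : (∑ j ∈ range r, Real.log (((s:ℝ) - j)/(s:ℝ))) ≤ -((r:ℝ)*((r:ℝ)-1)/2/(s:ℝ)) := by
    calc (∑ j ∈ range r, Real.log (((s:ℝ) - j)/(s:ℝ)))
        ≤ ∑ j ∈ range r, (-((j:ℝ)/(s:ℝ))) := by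
          apply Finset.sum_le_sum
          intro j hj
          have hj0 : (0:ℝ) ≤ (j:ℝ) := Nat.cast_nonneg j
          have h := log_div_le' (a := (s:ℝ) - j) (b := (s:ℝ)) (hsjpos j hj) (by linarith)
          have e : (s:ℝ) - ((s:ℝ) - j) = (j:ℝ) := by ring
          rw [e] at h
          exact h
      _ = -((r:ℝ)*((r:ℝ)-1)/2/(s:ℝ)) := by
          rw [Finset.sum_neg_distrib, ← Finset.sum_div, gauss_cast']
  have hSj_lb : -((r:ℝ)*((r:ℝ)-1)/2/(s:ℝ)) - 2*(r:ℝ)^3/(s:ℝ)^2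
      ≤ (∑ j ∈ range r, Real.log (((s:ℝ) - j)/(s:ℝ))) := by
    have step : ∀ j ∈ range r, (-((j:ℝ)/(s:ℝ)) - 2*(r:ℝ)^2/(s:ℝ)^2)
        ≤ Real.log (((s:ℝ) - j)/(s:ℝ)) := by
      intro j hj
      have hjr : (j:ℝ) < (r:ℝ) := by exact_mod_cast Finset.mem_range.mp hj
      have hj0 : (0:ℝ) ≤ (j:ℝ) := Nat.cast_nonneg j
      have hsj : (0:ℝ) < (s:ℝ) - j := hsjpos j hj
      have hsj2 : (s:ℝ)/2 ≤ (s:ℝ) - j := by linarith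
      have h := le_log_div' (a := (s:ℝ) - j) (b := (s:ℝ)) hsj (by linarith)
      have e : (s:ℝ) - ((s:ℝ) - j) = (j:ℝ) := by ring
      rw [e] at h
      -- j/(s-j) ≤ j/s + 2r²/s²
      have key : (j:ℝ)/((s:ℝ)-j) ≤ (j:ℝ)/(s:ℝ) + 2*(r:ℝ)^2/(s:ℝ)^2 := by
        have e1 : (j:ℝ)/((s:ℝ)-j) = (j:ℝ)/(s:ℝ) + (j:ℝ)*(j:ℝ)/((s:ℝ)*((s:ℝ)-j)) := by
          field_simp
          ring
        rw [e1]
        have h2 : (j:ℝ)*(j:ℝ)/((s:ℝ)*((s:ℝ)-j)) ≤ 2*(r:ℝ)^2/(s:ℝ)^2 := by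
          rw [div_le_div_iff₀ (by positivity) (by positivity)]
          have ha : (s:ℝ)*((s:ℝ)/2) ≤ (s:ℝ)*((s:ℝ)-j) := mul_le_mul_of_nonneg_left hsj2 hs0.le
          have hb : (j:ℝ)*(j:ℝ) ≤ (r:ℝ)*(r:ℝ) := mul_le_mul hjr.le hjr.le hj0 hr0.le
          nlinarith [mul_le_mul_of_nonneg_left ha (mul_nonneg hr0.le hr0.le),
            mul_le_mul_of_nonneg_right hb (sq_nonneg (s:ℝ))]
        linarith
      linarith
    calc -((r:ℝ)*((r:ℝ)-1)/2/(s:ℝ)) - 2*(r:ℝ)^3/(s:ℝ)^2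
        = ∑ j ∈ range r, (-((j:ℝ)/(s:ℝ)) - 2*(r:ℝ)^2/(s:ℝ)^2) := by
          rw [Finset.sum_sub_distrib, Finset.sum_neg_distrib, ← Finset.sum_div, gauss_cast',
            Finset.sum_const, Finset.card_range, nsmul_eq_mul]
          ring
      _ ≤ _ := Finset.sum_le_sum step
  -- bounds on Si
  have hSi_ub : (∑ i ∈ range M, Real.log ((N - i)/N)) ≤ -((M:ℝ)*((M:ℝ)-1)/2/N) := by
    calc (∑ i ∈ range M, Real.log ((N - i)/N))
        ≤ ∑ i ∈ range M, (-((i:ℝ)/N)) := by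
          apply Finset.sum_le_sum
          intro i hi
          have hi0 : (0:ℝ) ≤ (i:ℝ) := Nat.cast_nonneg i
          have h := log_div_le' (a := N - i) (b := N) (hNipos i hi) (by linarith)
          have e : N - (N - i) = (i:ℝ) := by ring
          rw [e] at h
          exact h
      _ = -((M:ℝ)*((M:ℝ)-1)/2/N) := by
          rw [Finset.sum_neg_distrib, ← Finset.sum_div, gauss_cast']
  have hSi_lb : -((M:ℝ)*((M:ℝ)-1)/2/N) - (M:ℝ)*(2*(M:ℝ)^2/N^2)
      ≤ (∑ i ∈ range M, Real.log ((N - i)/N)) := by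
    have step : ∀ i ∈ range M, (-((i:ℝ)/N) - 2*(M:ℝ)^2/N^2)
        ≤ Real.log ((N - i)/N) := by
      intro i hi
      have hiM : (i:ℝ) < (M:ℝ) := by exact_mod_cast Finset.mem_range.mp hi
      have hi0 : (0:ℝ) ≤ (i:ℝ) := Nat.cast_nonneg i
      have hNi : (0:ℝ) < N - i := hNipos i hi
      have hNi2 : N/2 ≤ N - i := by linarith
      have h := le_log_div' (a := N - i) (b := N) hNi (by linarith)
      have e : N - (N - i) = (i:ℝ) := by ring
      rw [e] at h
      have key : (i:ℝ)/(N-i) ≤ (i:ℝ)/N + 2*(M:ℝ)^2/N^2 := by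
        have e1 : (i:ℝ)/(N-i) = (i:ℝ)/N + (i:ℝ)*(i:ℝ)/(N*(N-i)) := by
          field_simp
          ring
        rw [e1]
        have h2 : (i:ℝ)*(i:ℝ)/(N*(N-i)) ≤ 2*(M:ℝ)^2/N^2 := by
          rw [div_le_div_iff₀ (by positivity) (by positivity)]
          have hMpos : (0:ℝ) ≤ (M:ℝ) := Nat.cast_nonneg M
          have ha : N*(N/2) ≤ N*(N-i) := mul_le_mul_of_nonneg_left hNi2 hN0.le
          have hb : (i:ℝ)*(i:ℝ) ≤ (M:ℝ)*(M:ℝ) := mul_le_mul hiM.le hiM.le hi0 hMpos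
          nlinarith [mul_le_mul_of_nonneg_left ha (mul_nonneg hMpos hMpos),
            mul_le_mul_of_nonneg_right hb (sq_nonneg N)]
        linarith
      linarith
    calc -((M:ℝ)*((M:ℝ)-1)/2/N) - (M:ℝ)*(2*(M:ℝ)^2/N^2)
        = ∑ i ∈ range M, (-((i:ℝ)/N) - 2*(M:ℝ)^2/N^2) := by
          rw [Finset.sum_sub_distrib, Finset.sum_neg_distrib, ← Finset.sum_div, gauss_cast',
            Finset.sum_const, Finset.card_range, nsmul_eq_mul]
      _ ≤ _ := Finset.sum_le_sum step
  constructor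
  · rw [hL]
    have h1 : (M:ℝ) * (∑ j ∈ range r, Real.log (((s:ℝ) - j)/(s:ℝ)))
        ≤ (M:ℝ) * (-((r:ℝ)*((r:ℝ)-1)/2/(s:ℝ))) := mul_le_mul_of_nonneg_left hSj_ub hM0
    linarith
  · rw [hL]
    have h1 : (M:ℝ) * (-((r:ℝ)*((r:ℝ)-1)/2/(s:ℝ)) - 2*(r:ℝ)^3/(s:ℝ)^2)
        ≤ (M:ℝ) * (∑ j ∈ range r, Real.log (((s:ℝ) - j)/(s:ℝ))) := mul_le_mul_of_nonneg_left hSj_lb hM0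
    linarith

set_option maxHeartbeats 1000000 in
/-- if `r ≥ 2` is fixed, `m = o(s^{4/3})` and `m ≤ C(s,r)`, then with
`d̄ = r·m/s`: for `r ≥ 3`, `C(C(s,r), m) ~ (s^{rm}/(m!·(r!)^m))·e^{−(r−1)d̄/2}`;
for `r = 2`, `C(C(s,2), m) ~ (s^{2m}/(m!·2^m))·e^{−d̄/2 − d̄²/4}`. -/
theorem stmt17 (r : ℕ) (hr : 2 ≤ r) (m : ℕ → ℕ)
    (hm : (fun s : ℕ => (m s : ℝ)) =o[atTop] (fun s : ℕ => (s : ℝ) ^ ((4 : ℝ) / 3)))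
    (hle : ∀ s, m s ≤ Nat.choose s r) :
    (3 ≤ r →
      Tendsto (fun s : ℕ =>
          (Nat.choose (Nat.choose s r) (m s) : ℝ) /
            (((s : ℝ) ^ (r * m s) / ((Nat.factorial (m s) : ℝ) * (Nat.factorial r : ℝ) ^ (m s)))
              * Real.exp (-((r : ℝ) - 1) * ((r : ℝ) * m s / s) / 2)))
        atTop (nhds 1))
    ∧ (r = 2 →
      Tendsto (fun s : ℕ =>
          (Nat.choose (Nat.choose s 2) (m s) : ℝ) /
            (((s : ℝ) ^ (2 * m s) / ((Nat.factorial (m s) : ℝ) * 2 ^ (m s)))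
              * Real.exp (-((2 : ℝ) * m s / s) / 2 - ((2 : ℝ) * m s / s) ^ 2 / 4)))
        atTop (nhds 1)) := by
  have he : Tendsto (fun s : ℕ => (m s : ℝ)/(s:ℝ)^((4:ℝ)/3)) atTop (nhds 0) :=
    hm.tendsto_div_nhds_zero
  have n1 : Tendsto (fun s : ℕ => (m s:ℝ)/(s:ℝ)^2) atTop (nhds 0) := by
    have := nullpow m he 1 2 le_rfl (by norm_num)
    simpa using this
  have n2 : Tendsto (fun s : ℕ => (m s:ℝ)^2/(s:ℝ)^3) atTop (nhds 0) :=
    nullpow m he 2 3 (by norm_num) (by norm_num)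
  have n3 : Tendsto (fun s : ℕ => (m s:ℝ)^3/(s:ℝ)^4) atTop (nhds 0) :=
    nullpow m he 3 4 (by norm_num) (by norm_num)
  set C1 : ℝ := 2^r * r.factorial with hC1def
  have hC1 : (0:ℝ) < C1 := by positivity
  have hNlb : ∀ᶠ s : ℕ in atTop, (s:ℝ)^r ≤ C1 * (s.choose r : ℝ) := by
    filter_upwards [eventually_ge_atTop (2*r)] with s hs
    have := choose_lb r s hs
    rw [hC1def]
    exact_mod_cast this
  have hMev : ∀ᶠ s : ℕ in atTop, 2*(m s:ℝ) ≤ (s.choose r : ℝ) := by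
    have hδ : (0:ℝ) < 1/(2*C1) := by positivity
    filter_upwards [n1.eventually_lt_const hδ, hNlb, eventually_ge_atTop 1] with s hlt hnb hs1
    have hs1' : (1:ℝ) ≤ (s:ℝ) := by exact_mod_cast hs1
    have hs0 : (0:ℝ) < (s:ℝ) := by linarith
    have hsq : (s:ℝ)^2 ≤ (s:ℝ)^r := pow_le_pow_right₀ hs1' hr
    have h1 : (m s:ℝ) < (1/(2*C1)) * (s:ℝ)^2 := by
      rw [div_lt_iff₀ (by positivity)] at hlt
      linarith
    have h2 : (s:ℝ)^2 ≤ C1 * (s.choose r : ℝ) := le_trans hsq hnb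
    have h3 : (1/(2*C1)) * (s:ℝ)^2 = ((s:ℝ)^2/C1)/2 := by field_simp
    have h4 : (s:ℝ)^2/C1 ≤ (s.choose r : ℝ) := by
      rw [div_le_iff₀ hC1]
      linarith
    nlinarith
  constructor
  · -- case r ≥ 3
    intro hr3
    set c : ℝ := (r:ℝ)*((r:ℝ)-1)/2 with hcdef
    set L : ℕ → ℝ := fun s =>
      ∑ i ∈ range (m s), Real.log (((s.choose r : ℝ) - i) * (r.factorial : ℝ) / (s:ℝ)^r)
      with hLdef
    have hT : Tendsto (fun s : ℕ => L s + c*(m s)/s) atTop (nhds 0) := by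
      apply tendsto_of_tendsto_of_tendsto_of_le_of_le'
        (g := fun s : ℕ => -(2*(r:ℝ)^3*((m s:ℝ)/(s:ℝ)^2) + C1*((m s:ℝ)^2/(s:ℝ)^3)
          + 2*C1^2*((m s:ℝ)^3/(s:ℝ)^4)))
        (h := fun _ => (0:ℝ))
      · have := (((n1.const_mul (2*(r:ℝ)^3)).add (n2.const_mul C1)).add
          (n3.const_mul (2*C1^2))).neg
        simpa using this
      · exact tendsto_const_nhds
      · filter_upwards [hNlb, hMev, eventually_ge_atTop (2*r), eventually_ge_atTop 1]
          with s h1 h2 h3 h4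
        obtain ⟨hub, hlb⟩ := Lbounds r s (m s) hr h3 h2
        set M : ℝ := (m s : ℝ) with hMdef
        set N : ℝ := (s.choose r : ℝ) with hNdef
        have hs1' : (1:ℝ) ≤ (s:ℝ) := by exact_mod_cast h4
        have hs0 : (0:ℝ) < (s:ℝ) := by linarith
        have hN0 : (0:ℝ) < N := by
          rw [hNdef]; exact_mod_cast Nat.choose_pos (by omega : r ≤ s)
        have hM0 : (0:ℝ) ≤ M := Nat.cast_nonneg _
        have hs3r : (s:ℝ)^3 ≤ (s:ℝ)^r := pow_le_pow_right₀ hs1' hr3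
        have hsr3 : (s:ℝ)^3 ≤ C1*N := le_trans hs3r h1
        have hinv : 1/N ≤ C1/(s:ℝ)^3 := by
          rw [div_le_div_iff₀ hN0 (by positivity)]
          linarith
        have hq1 : M*(M-1)/2/N ≤ C1*(M^2/(s:ℝ)^3) := by
          have h5 : M*(M-1)/2 ≤ M^2 := by nlinarith
          calc M*(M-1)/2/N = (M*(M-1)/2)*(1/N) := by ring
            _ ≤ M^2 * (C1/(s:ℝ)^3) :=
              mul_le_mul h5 hinv (by positivity) (by positivity)
            _ = C1*(M^2/(s:ℝ)^3) := by ring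
        have hq2 : M*(2*M^2/N^2) ≤ 2*C1^2*(M^3/(s:ℝ)^4) := by
          have a1 : (1/N)^2 ≤ (C1/(s:ℝ)^3)^2 := by
            apply pow_le_pow_left₀ (by positivity) hinv
          have a2 : (C1/(s:ℝ)^3)^2 = C1^2/(s:ℝ)^6 := by rw [div_pow, ← pow_mul]
          have a3 : C1^2/(s:ℝ)^6 ≤ C1^2/(s:ℝ)^4 := by
            apply div_le_div_of_nonneg_left (by positivity) (by positivity)
            exact pow_le_pow_right₀ hs1' (by norm_num)
          have a4 : 1/N^2 ≤ C1^2/(s:ℝ)^4 := by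
            have : (1/N)^2 = 1/N^2 := by rw [div_pow]; norm_num
            rw [← this]; rw [a2] at a1; linarith
          calc M*(2*M^2/N^2) = 2*M^3*(1/N^2) := by ring
            _ ≤ 2*M^3*(C1^2/(s:ℝ)^4) :=
              mul_le_mul_of_nonneg_left a4 (by positivity)
            _ = 2*C1^2*(M^3/(s:ℝ)^4) := by ring
        have hd : M * (-(c/(s:ℝ)) - 2*(r:ℝ)^3/(s:ℝ)^2)
            = M*(-(c/(s:ℝ))) - 2*(r:ℝ)^3*(M/(s:ℝ)^2) := by ring
        have hd2 : M*(-(c/(s:ℝ))) + c*M/(s:ℝ) = 0 := by ring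
        rw [hd] at hlb
        linarith
      · filter_upwards [hNlb, hMev, eventually_ge_atTop (2*r), eventually_ge_atTop 1]
          with s h1 h2 h3 h4
        obtain ⟨hub, hlb⟩ := Lbounds r s (m s) hr h3 h2
        set M : ℝ := (m s : ℝ) with hMdef
        set N : ℝ := (s.choose r : ℝ) with hNdef
        have hN0 : (0:ℝ) < N := by
          rw [hNdef]; exact_mod_cast Nat.choose_pos (by omega : r ≤ s)
        have hnn : (0:ℝ) ≤ M*(M-1)/2/N :=
          div_nonneg (div_nonneg (cast_mul_sub_one_nonneg (m s)) (by norm_num)) hN0.le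
        have hd2 : M*(-(c/(s:ℝ))) + c*M/(s:ℝ) = 0 := by ring
        linarith
    have hexp : Tendsto (fun s : ℕ => Real.exp (L s + c*(m s)/s)) atTop (nhds 1) := by
      have := (Real.continuous_exp.tendsto 0).comp hT
      rw [Real.exp_zero] at this
      exact this
    apply hexp.congr'
    filter_upwards [eventually_ge_atTop 1] with s hs1
    have e1 : Real.exp (-((r:ℝ)-1) * ((r:ℝ)*(m s)/(s:ℝ))/2)
        = Real.exp (-(c*(m s)/(s:ℝ))) := by
      congr 1
      rw [hcdef]; ring
    rw [e1, ratio_eq r s (m s) hs1 (hle s) (c*(m s)/(s:ℝ))]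
  · -- case r = 2
    intro hr2
    subst hr2
    have hNval : ∀ᶠ s : ℕ in atTop, ((s.choose 2 : ℕ):ℝ) = (s:ℝ)*((s:ℝ)-1)/2 := by
      filter_upwards [eventually_ge_atTop 2] with s hs2
      have hd := descProd_cast' 2 s hs2
      have hp : ∏ j ∈ range 2, ((s:ℝ) - j) = (s:ℝ)*((s:ℝ)-1) := by
        rw [Finset.prod_range_succ, Finset.prod_range_succ, Finset.prod_range_zero]
        push_cast
        ring
      rw [hp] at hd
      have hf : ((Nat.factorial 2 : ℕ):ℝ) = 2 := by norm_num [Nat.factorial]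
      rw [hf] at hd
      linarith
    have hT : Tendsto (fun s : ℕ =>
        (∑ i ∈ range (m s), Real.log (((s.choose 2 : ℝ) - i) * ((Nat.factorial 2 : ℕ) : ℝ) / (s:ℝ)^2))
          + (m s:ℝ)/(s:ℝ) + (m s:ℝ)^2/(s:ℝ)^2) atTop (nhds 0) := by
      have hupA : Tendsto (fun s : ℕ => (m s:ℝ)/((s:ℝ)*((s:ℝ)-1))) atTop (nhds 0) := by
        apply squeeze_zero' ?_ ?_ (by simpa using (n1.const_mul 2) : Tendsto (fun s : ℕ => 2*((m s:ℝ)/(s:ℝ)^2)) atTop (nhds 0))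
        · filter_upwards [eventually_ge_atTop 2] with s hs2
          have hs2' : (2:ℝ) ≤ (s:ℝ) := by exact_mod_cast hs2
          exact div_nonneg (Nat.cast_nonneg _) (by nlinarith)
        · filter_upwards [eventually_ge_atTop 2] with s hs2
          have hs2' : (2:ℝ) ≤ (s:ℝ) := by exact_mod_cast hs2
          have hs0 : (0:ℝ) < (s:ℝ) := by linarith
          have hM0 : (0:ℝ) ≤ (m s:ℝ) := Nat.cast_nonneg _
          have he1 : 2*((m s:ℝ)/(s:ℝ)^2) = (2*(m s:ℝ))/(s:ℝ)^2 := by ring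
          rw [he1, div_le_div_iff₀ (by nlinarith) (by positivity)]
          nlinarith [mul_le_mul_of_nonneg_left (show (2:ℝ)*(s:ℝ) ≤ (s:ℝ)^2 by nlinarith) hM0]
      have hupB : Tendsto (fun s : ℕ => (m s:ℝ)^2/((s:ℝ)^2*((s:ℝ)-1))) atTop (nhds 0) := by
        apply squeeze_zero' ?_ ?_ (by simpa using (n2.const_mul 2) : Tendsto (fun s : ℕ => 2*((m s:ℝ)^2/(s:ℝ)^3)) atTop (nhds 0))
        · filter_upwards [eventually_ge_atTop 2] with s hs2
          have hs2' : (2:ℝ) ≤ (s:ℝ) := by exact_mod_cast hs2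
          exact div_nonneg (by positivity) (by nlinarith)
        · filter_upwards [eventually_ge_atTop 2] with s hs2
          have hs2' : (2:ℝ) ≤ (s:ℝ) := by exact_mod_cast hs2
          have hs0 : (0:ℝ) < (s:ℝ) := by linarith
          have hM0 : (0:ℝ) ≤ (m s:ℝ)^2 := by positivity
          have he1 : 2*((m s:ℝ)^2/(s:ℝ)^3) = (2*(m s:ℝ)^2)/(s:ℝ)^3 := by ring
          rw [he1, div_le_div_iff₀ (by nlinarith) (by positivity)]
          nlinarith [mul_le_mul_of_nonneg_left (show (2:ℝ)*((s:ℝ)^2*((s:ℝ)-1)) ≥ (s:ℝ)^3 by nlinarith) hM0]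
      apply tendsto_of_tendsto_of_tendsto_of_le_of_le'
        (g := fun s : ℕ => ((m s:ℝ)/((s:ℝ)*((s:ℝ)-1)) - (m s:ℝ)^2/((s:ℝ)^2*((s:ℝ)-1)))
            - 16*((m s:ℝ)/(s:ℝ)^2) - 32*((m s:ℝ)^3/(s:ℝ)^4))
        (h := fun s : ℕ => (m s:ℝ)/((s:ℝ)*((s:ℝ)-1)) - (m s:ℝ)^2/((s:ℝ)^2*((s:ℝ)-1)))
      · have := ((hupA.sub hupB).sub (n1.const_mul 16)).sub (n3.const_mul 32)
        simpa using this
      · have := hupA.sub hupB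
        simpa using this
      · -- lower bound
        filter_upwards [hNval, hMev, eventually_ge_atTop 4] with s hNv h2 h3
        obtain ⟨hub, hlb⟩ := Lbounds 2 s (m s) le_rfl (by omega) h2
        set M : ℝ := (m s : ℝ) with hMdef
        set N : ℝ := ((s.choose 2 : ℕ):ℝ) with hNdef
        have hs2' : (2:ℝ) ≤ (s:ℝ) := by
          have : (4:ℕ) ≤ s := h3
          have : (4:ℝ) ≤ (s:ℝ) := by exact_mod_cast this
          linarith
        have hs0 : (0:ℝ) < (s:ℝ) := by linarith
        have hs1 : (0:ℝ) < (s:ℝ)-1 := by linarith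
        have hM0 : (0:ℝ) ≤ M := Nat.cast_nonneg _
        push_cast at hlb
        have eC : M^2/(s:ℝ)^2 - M*(M-1)/2/N
            = M/((s:ℝ)*((s:ℝ)-1)) - M^2/((s:ℝ)^2*((s:ℝ)-1)) := by
          rw [hNv]
          field_simp
          ring
        have eD : M*(2*M^2/N^2) ≤ 32*(M^3/(s:ℝ)^4) := by
          rw [hNv]
          have e1 : M*(2*M^2/((s:ℝ)*((s:ℝ)-1)/2)^2) = 8*M^3/((s:ℝ)*((s:ℝ)-1))^2 := by
            field_simp
            ring
          have e2 : 32*(M^3/(s:ℝ)^4) = (32*M^3)/(s:ℝ)^4 := by ring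
          rw [e1, e2, div_le_div_iff₀ (by positivity) (by positivity)]
          have h5 : (s:ℝ)^2 ≤ 4*((s:ℝ)-1)^2 := by nlinarith
          nlinarith [mul_le_mul_of_nonneg_left h5 (show (0:ℝ) ≤ 8*M^3*(s:ℝ)^2 by positivity)]
        have eA : M * (-((2:ℝ)*((2:ℝ)-1)/2/(s:ℝ)) - 2*(2:ℝ)^3/(s:ℝ)^2)
            = -(M/(s:ℝ)) - 16*(M/(s:ℝ)^2) := by ring
        linarith [hlb, eA, eC, eD]
      · -- upper bound
        filter_upwards [hNval, hMev, eventually_ge_atTop 4] with s hNv h2 h3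
        obtain ⟨hub, hlb⟩ := Lbounds 2 s (m s) le_rfl (by omega) h2
        set M : ℝ := (m s : ℝ) with hMdef
        set N : ℝ := ((s.choose 2 : ℕ):ℝ) with hNdef
        have hs2' : (2:ℝ) ≤ (s:ℝ) := by
          have : (4:ℕ) ≤ s := h3
          have : (4:ℝ) ≤ (s:ℝ) := by exact_mod_cast this
          linarith
        have hs0 : (0:ℝ) < (s:ℝ) := by linarith
        have hs1 : (0:ℝ) < (s:ℝ)-1 := by linarith
        have hM0 : (0:ℝ) ≤ M := Nat.cast_nonneg _
        push_cast at hub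
        have eC : M^2/(s:ℝ)^2 - M*(M-1)/2/N
            = M/((s:ℝ)*((s:ℝ)-1)) - M^2/((s:ℝ)^2*((s:ℝ)-1)) := by
          rw [hNv]
          field_simp
          ring
        have eA : M * (-((2:ℝ)*((2:ℝ)-1)/2/(s:ℝ))) = -(M/(s:ℝ)) := by ring
        linarith [hub, eA, eC]
    have hexp : Tendsto (fun s : ℕ => Real.exp (
        (∑ i ∈ range (m s), Real.log (((s.choose 2 : ℝ) - i) * ((Nat.factorial 2 : ℕ) : ℝ) / (s:ℝ)^2))
          + (m s:ℝ)/(s:ℝ) + (m s:ℝ)^2/(s:ℝ)^2)) atTop (nhds 1) := by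
      have := (Real.continuous_exp.tendsto 0).comp hT
      rw [Real.exp_zero] at this
      exact this
    apply hexp.congr'
    filter_upwards [eventually_ge_atTop 1] with s hs1
    have hre := ratio_eq 2 s (m s) hs1 (hle s) ((m s:ℝ)/(s:ℝ) + (m s:ℝ)^2/(s:ℝ)^2)
    have hf : ((Nat.factorial 2 : ℕ):ℝ) = 2 := by norm_num [Nat.factorial]
    have he2 : Real.exp (-((m s:ℝ)/(s:ℝ) + (m s:ℝ)^2/(s:ℝ)^2))
        = Real.exp (-((2:ℝ)*(m s)/(s:ℝ))/2 - ((2:ℝ)*(m s)/(s:ℝ))^2/4) := by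
      congr 1
      ring
    rw [he2] at hre
    have hadd : (∑ i ∈ range (m s), Real.log (((s.choose 2 : ℝ) - i) * ((Nat.factorial 2 : ℕ) : ℝ) / (s:ℝ)^2))
          + (m s:ℝ)/(s:ℝ) + (m s:ℝ)^2/(s:ℝ)^2
        = (∑ i ∈ range (m s), Real.log (((s.choose 2 : ℝ) - i) * ((Nat.factorial 2 : ℕ) : ℝ) / (s:ℝ)^2))
          + ((m s:ℝ)/(s:ℝ) + (m s:ℝ)^2/(s:ℝ)^2) := by ring
    rw [hadd, hf]
    exact hre.symm
end

section
/- Let d̄ > 2 be real, let ξ ∈ (0,1) satisfy Φ_2(ξ) = d̄, and set x = d̄/2 and y = (1−ξ)/(1+ξ). Assume 1 − x + x·y > 0 and 1 − x + x·y² > 0, and set a(x) = x(x+1)(1−y) + log(1 − x + x·y) − (1/2)·log(1 − x + x·y²). Then: (i) 2·x·y = log((1+y)/(1−y)); (ii) log(2·e^{−x}·y^{1−x}/√(1−y²)) = −F_2(d̄); and (iii) exp(a(x)) = G_2(d̄). -/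
/-!
With `y = (1 - ξ)/(1 + ξ)` the substitution `ξ ↦ y` is an involution, so `(1 + y)/(1 - y) = 1/ξ`
and `1 - y² = 4ξ/(1 + ξ)²`. The equation `Φ₂(ξ) = d̄` then says exactly `d̄ y = log (1/ξ)`,
which is (i). Parts (ii) and (iii) follow by expressing every factor through `ξ`: in (ii) the
remaining discrepancy is again `Φ₂(ξ) = d̄`, while (iii) is an identity of rational functions
`1 - x + xy = a₂/(1 + ξ)`, `1 - x + xy² = b₂/(1 + ξ)²`, `x(x + 1)(1 - y) = g₂`.
-/

open Real

noncomputable section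

section Cayley

variable {ξ : ℝ}

theorem one_add_cayley_div_one_sub_cayley (hξ : ξ ≠ 0) (hξ' : 1 + ξ ≠ 0) :
    (1 + (1 - ξ) / (1 + ξ)) / (1 - (1 - ξ) / (1 + ξ)) = 1 / ξ := by
  have hnum : 1 + (1 - ξ) / (1 + ξ) = 2 / (1 + ξ) := by field_simp; ring
  have hden : 1 - (1 - ξ) / (1 + ξ) = 2 * ξ / (1 + ξ) := by field_simp; ring
  rw [hnum, hden, div_div_div_cancel_right₀ hξ']
  field_simp

theorem one_sub_cayley_sq (hξ : 1 + ξ ≠ 0) :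
    1 - ((1 - ξ) / (1 + ξ)) ^ 2 = 4 * ξ / (1 + ξ) ^ 2 := by
  field_simp
  ring

end Cayley

theorem log_two_mul_exp_mul_rpow_div_sqrt {x y : ℝ} (hy0 : 0 < y) (hy1 : y < 1) :
    log (2 * exp (-x) * y ^ (1 - x) / √(1 - y ^ 2))
      = log 2 - x + (1 - x) * log y - 1 / 2 * log (1 - y ^ 2) := by
  have h : 0 < 1 - y ^ 2 := by nlinarith
  rw [log_div (by positivity) (by positivity), log_mul (by positivity) (by positivity),
    log_mul two_ne_zero (exp_ne_zero _), log_exp, log_rpow hy0, log_sqrt h.le]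
  ring

theorem exp_add_log_sub_half_log {E A B : ℝ} (hA : 0 < A) (hB : 0 < B) :
    exp (E + log A - 1 / 2 * log B) = A / √B * exp E := by
  have hsqrt : 1 / 2 * log B = log √B := by rw [log_sqrt hB.le]; ring
  rw [exp_sub, exp_add, exp_log hA, hsqrt, exp_log (sqrt_pos.mpr hB)]
  ring

-- `F₂` and `G₂` take the root `ξ = Φ₂⁻¹(d)` as an explicit second argument.
def F₂ (d ξ : ℝ) : ℝ :=
  d * log (1 - ξ) - d / 2 * log (1 - ξ ^ 2) - ξ / (1 - ξ) * log ξ - log (1 - ξ)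

def G₂ (d ξ : ℝ) : ℝ :=
  (1 + ξ - d * ξ) / √((1 + ξ) ^ 2 - 2 * d * ξ)
    * exp ((2 * d * ξ + d ^ 2 * ξ) / (2 * (1 + ξ)))

section

variable {d ξ : ℝ}

theorem two_mul_half_mul_cayley_eq_log (hξ0 : 0 < ξ) (hξ1 : ξ < 1)
    (hPhi : log (1 / ξ) * (1 + ξ) / (1 - ξ) = d) :
    2 * (d / 2) * ((1 - ξ) / (1 + ξ))
      = log ((1 + (1 - ξ) / (1 + ξ)) / (1 - (1 - ξ) / (1 + ξ))) := by
  have hm : 0 < 1 - ξ := by linarith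
  rw [one_add_cayley_div_one_sub_cayley hξ0.ne' (by positivity), ← hPhi]
  field_simp

theorem log_two_mul_exp_mul_cayley_rpow_div_sqrt_eq_neg_F₂ (hξ0 : 0 < ξ) (hξ1 : ξ < 1)
    (hPhi : log (1 / ξ) * (1 + ξ) / (1 - ξ) = d) :
    log (2 * exp (-(d / 2)) * ((1 - ξ) / (1 + ξ)) ^ (1 - d / 2)
        / √(1 - ((1 - ξ) / (1 + ξ)) ^ 2)) = -F₂ d ξ := by
  have hm : 0 < 1 - ξ := by linarith
  have hp : 0 < 1 + ξ := by linarith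
  have hlogy : log ((1 - ξ) / (1 + ξ)) = log (1 - ξ) - log (1 + ξ) :=
    log_div hm.ne' hp.ne'
  have hlog1y2 : log (1 - ((1 - ξ) / (1 + ξ)) ^ 2) = 2 * log 2 + log ξ - 2 * log (1 + ξ) := by
    rw [one_sub_cayley_sq hp.ne', log_div (by positivity) (by positivity),
      log_mul (by norm_num) hξ0.ne', log_pow, show (4 : ℝ) = 2 ^ 2 by norm_num, log_pow]
    push_cast
    ring
  have hlog1ξ2 : log (1 - ξ ^ 2) = log (1 - ξ) + log (1 + ξ) := by
    rw [← log_mul hm.ne' hp.ne']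
    ring_nf
  have hξlog : ξ / (1 - ξ) * log ξ = -(d / 2) - 1 / 2 * log ξ := by
    rw [← hPhi, one_div, log_inv]
    field_simp
    ring
  rw [log_two_mul_exp_mul_rpow_div_sqrt (by positivity) ((div_lt_one hp).mpr (by linarith)),
    hlogy, hlog1y2, F₂, hlog1ξ2, hξlog]
  ring

theorem exp_add_log_sub_half_log_eq_G₂ (hp : 0 < 1 + ξ)
    (h1 : 0 < 1 - d / 2 + d / 2 * ((1 - ξ) / (1 + ξ)))
    (h2 : 0 < 1 - d / 2 + d / 2 * ((1 - ξ) / (1 + ξ)) ^ 2) :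
    exp (d / 2 * (d / 2 + 1) * (1 - (1 - ξ) / (1 + ξ))
        + log (1 - d / 2 + d / 2 * ((1 - ξ) / (1 + ξ)))
        - 1 / 2 * log (1 - d / 2 + d / 2 * ((1 - ξ) / (1 + ξ)) ^ 2)) = G₂ d ξ := by
  have hA : 1 - d / 2 + d / 2 * ((1 - ξ) / (1 + ξ)) = (1 + ξ - d * ξ) / (1 + ξ) := by
    field_simp; ring
  have hB : 1 - d / 2 + d / 2 * ((1 - ξ) / (1 + ξ)) ^ 2
      = ((1 + ξ) ^ 2 - 2 * d * ξ) / (1 + ξ) ^ 2 := by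
    field_simp; ring
  have hE : d / 2 * (d / 2 + 1) * (1 - (1 - ξ) / (1 + ξ))
      = (2 * d * ξ + d ^ 2 * ξ) / (2 * (1 + ξ)) := by
    field_simp; ring
  rw [exp_add_log_sub_half_log h1 h2, hA, hB, hE, sqrt_div' _ (by positivity),
    sqrt_sq hp.le, div_div_div_cancel_right₀ hp.ne', G₂]

end

end

theorem stmt18_general (dbar ξ x y : ℝ)
    (hξ : ξ ∈ Set.Ioo (0 : ℝ) 1)
    (hPhi : Real.log (1 / ξ) * (1 + ξ) / (1 - ξ) = dbar)
    (hx : x = dbar / 2) (hy : y = (1 - ξ) / (1 + ξ))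
    (h1 : 0 < 1 - x + x * y) (h2 : 0 < 1 - x + x * y ^ 2) :
    2 * x * y = Real.log ((1 + y) / (1 - y))
    ∧ Real.log (2 * Real.exp (-x) * y ^ (1 - x) / Real.sqrt (1 - y ^ 2))
        = -(dbar * Real.log (1 - ξ) - (dbar / 2) * Real.log (1 - ξ ^ 2)
            - (ξ / (1 - ξ)) * Real.log ξ - Real.log (1 - ξ))
    ∧ Real.exp (x * (x + 1) * (1 - y) + Real.log (1 - x + x * y)
          - (1 / 2) * Real.log (1 - x + x * y ^ 2))
        = (1 + ξ - dbar * ξ) / Real.sqrt ((1 + ξ) ^ 2 - 2 * dbar * ξ)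
            * Real.exp ((2 * dbar * ξ + dbar ^ 2 * ξ) / (2 * (1 + ξ))) := by
  obtain ⟨hξ0, hξ1⟩ := hξ
  subst hx hy
  exact ⟨two_mul_half_mul_cayley_eq_log hξ0 hξ1 hPhi,
    log_two_mul_exp_mul_cayley_rpow_div_sqrt_eq_neg_F₂ hξ0 hξ1 hPhi,
    exp_add_log_sub_half_log_eq_G₂ (by linarith) h1 h2⟩

/-- comparison of the Bender–Canfield–McKay formula with `F_2` and `G_2`.
Here `ξ ∈ (0,1)` satisfies `Φ_2(ξ) = d̄`, `x = d̄/2`, `y = (1−ξ)/(1+ξ)`, and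
`a(x) = x(x+1)(1−y) + log(1−x+xy) − (1/2)log(1−x+xy²)`. Then:
(i) `2xy = log((1+y)/(1−y))`;
(ii) `log(2e^{−x}y^{1−x}/√(1−y²)) = −F_2(d̄)`;
(iii) `exp(a(x)) = G_2(d̄) = (a_2(d̄)/√(b_2(d̄)))·e^{g_2(d̄)}`. -/
theorem stmt18 (dbar ξ x y : ℝ) (hd : 2 < dbar)
    (hξ : ξ ∈ Set.Ioo (0 : ℝ) 1)
    (hPhi : Real.log (1 / ξ) * (1 + ξ) / (1 - ξ) = dbar)
    (hx : x = dbar / 2) (hy : y = (1 - ξ) / (1 + ξ))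
    (h1 : 0 < 1 - x + x * y) (h2 : 0 < 1 - x + x * y ^ 2) :
    2 * x * y = Real.log ((1 + y) / (1 - y))
    ∧ Real.log (2 * Real.exp (-x) * y ^ (1 - x) / Real.sqrt (1 - y ^ 2))
        = -(dbar * Real.log (1 - ξ) - (dbar / 2) * Real.log (1 - ξ ^ 2)
            - (ξ / (1 - ξ)) * Real.log ξ - Real.log (1 - ξ))
    ∧ Real.exp (x * (x + 1) * (1 - y) + Real.log (1 - x + x * y)
          - (1 / 2) * Real.log (1 - x + x * y ^ 2))
        = (1 + ξ - dbar * ξ) / Real.sqrt ((1 + ξ) ^ 2 - 2 * dbar * ξ)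
            * Real.exp ((2 * dbar * ξ + dbar ^ 2 * ξ) / (2 * (1 + ξ))) :=
  stmt18_general dbar ξ x y hξ hPhi hx hy h1 h2
end
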